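/- arXiv:1801.02002 — 9 statements merged into one kernel-verified Lean document; each statement's English description precedes it below -/
import Mathlib

section
/- The set {e_1 + e_2 + ... + e_n - e_{n+1} : n ∈ ℕ} of vectors in c₀, where (e_k) is the canonical basis, is a normalized 2-equilateral set; that is, each element has norm 1 and any two distinct elements are at distance exactly 2. -/
open Set Filter

noncomputable section

/-- The canonical unit vector basis of `c₀`. -/
def e (k : ℕ) : ZeroAtInftyContinuousMap ℕ ℝ where
  toFun m := if m = k then 1 else 0
  continuous_toFun := continuous_of_discreteTopology
  zero_at_infty' := by
    rw [cocompact_eq_cofinite]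
    apply Filter.Tendsto.congr' _ tendsto_const_nhds
    filter_upwards [Filter.eventually_cofinite_ne k] with m hm
    simp [hm]

/-- The vector `e 0 + e 1 + ⋯ + e n - e (n+1)` in `c₀`. -/
def v (n : ℕ) : ZeroAtInftyContinuousMap ℕ ℝ :=
  (∑ k ∈ Finset.range (n + 1), e k) - e (n + 1)

/-!
All coordinates of each `v n` lie in `[-1, 1]`, and `v n 0 = 1`. For `n < m`, coordinate `n + 1`
of `v n` is `-1` while that of `v m` is `1`, so the sup-norm distance `2` is attained there.
-/

open scoped ZeroAtInfty

theorem ZeroAtInftyContinuousMap.finset_sum_apply {ι α β : Type*} [TopologicalSpace α]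
    [TopologicalSpace β] [AddCommMonoid β] [ContinuousAdd β] (s : Finset ι) (f : ι → C₀(α, β))
    (x : α) : (∑ i ∈ s, f i) x = ∑ i ∈ s, f i x :=
  map_sum (⟨⟨fun g : C₀(α, β) => g x, rfl⟩, fun _ _ => rfl⟩ : C₀(α, β) →+ β) f s

theorem ZeroAtInftyContinuousMap.norm_eq_of_forall_le_of_eq {α β : Type*} [TopologicalSpace α]
    [SeminormedAddCommGroup β] {f : C₀(α, β)} {C : ℝ} (hle : ∀ x, ‖f x‖ ≤ C) (x₀ : α)
    (hx₀ : ‖f x₀‖ = C) : ‖f‖ = C := by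
  rw [← norm_toBCF_eq_norm]
  exact le_antisymm ((BoundedContinuousFunction.norm_le (hx₀ ▸ norm_nonneg _)).2 hle)
    (hx₀.symm.le.trans (f.toBCF.norm_coe_le_norm x₀))

theorem e_apply (k m : ℕ) : e k m = if m = k then 1 else 0 := rfl

theorem v_apply (n k : ℕ) : v n k = if k ≤ n then 1 else if k = n + 1 then -1 else 0 := by
  simp only [v, ZeroAtInftyContinuousMap.sub_apply, ZeroAtInftyContinuousMap.finset_sum_apply,
    e_apply, Finset.sum_ite_eq, Finset.mem_range, Nat.lt_succ_iff]
  split_ifs <;> grind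

theorem abs_v_apply_le (n k : ℕ) : |v n k| ≤ 1 := by
  rw [v_apply]
  split_ifs <;> norm_num

theorem norm_v (n : ℕ) : ‖v n‖ = 1 :=
  ZeroAtInftyContinuousMap.norm_eq_of_forall_le_of_eq (fun k => abs_v_apply_le n k) 0
    (by simp [v_apply])

theorem norm_v_sub_v_of_lt {n m : ℕ} (h : n < m) : ‖v n - v m‖ = 2 := by
  refine ZeroAtInftyContinuousMap.norm_eq_of_forall_le_of_eq (fun k => ?_) (n + 1) ?_
  · calc |v n k - v m k| ≤ |v n k| + |v m k| := abs_sub _ _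
      _ ≤ 2 := by linarith [abs_v_apply_le n k, abs_v_apply_le m k]
  · norm_num [v_apply, h]

/-- The set `{e_1 + ⋯ + e_n - e_{n+1} : n ∈ ℕ}` is a normalized 2-equilateral
set in `c₀`. -/
theorem stmt0 :
    (∀ n : ℕ, ‖v n‖ = 1) ∧
    (∀ n m : ℕ, n ≠ m → ‖v n - v m‖ = 2) := by
  refine ⟨norm_v, fun n m hnm => ?_⟩
  rcases hnm.lt_or_gt with h | h
  · exact norm_v_sub_v_of_lt h
  · rw [norm_sub_rev]
    exact norm_v_sub_v_of_lt h
end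
end

section
/- Let X be a normed space and S a λ-equilateral subset of X (i.e., ‖x - y‖ = λ for all distinct x, y ∈ S), and let M = sup{‖x‖ : x ∈ S} < ∞. Then S is a (M, 1, λ)-bounded and separated antipodal set: for every x ≠ y in S there exists f ∈ X* with ‖f‖ ≤ 1, f(y) - f(x) ≥ λ, and f(x) ≤ f(z) ≤ f(y) for all z ∈ S. -/
open Set Filter

noncomputable section

/-- `S` is a `(c₁, c₂, d)`-bounded and separated antipodal subset of `X`. -/
def IsBSA (X : Type*) [NormedAddCommGroup X] [NormedSpace ℝ X] (S : Set X)
    (c₁ c₂ d : ℝ) : Prop :=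
  (∀ x ∈ S, ‖x‖ ≤ c₁) ∧
  ∀ x ∈ S, ∀ y ∈ S, x ≠ y → ∃ f : X →L[ℝ] ℝ, ‖f‖ ≤ c₂ ∧ d ≤ f y - f x ∧
    ∀ z ∈ S, f x ≤ f z ∧ f z ≤ f y

/-- The antipodal Kottman constant `K_a(X)`. -/
def Ka (X : Type*) [NormedAddCommGroup X] [NormedSpace ℝ X] : ℝ :=
  sSup {d : ℝ | ∃ S : Set X, S.Infinite ∧ IsBSA X S 1 1 d}

/-- The Kottman (separation) constant `K(X)`. -/
def Kc (X : Type*) [NormedAddCommGroup X] : ℝ :=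
  sSup {d : ℝ | ∃ S : Set X, S ⊆ Metric.closedBall 0 1 ∧ S.Infinite ∧
    ∀ x ∈ S, ∀ y ∈ S, x ≠ y → d ≤ ‖x - y‖}

/-! A norming functional `f` of `y - x` satisfies `f y - f x = ‖y - x‖`. If no point of `S` is
farther from `x` or from `y` than `y` is from `x` (as in an equilateral set), the 1-Lipschitz
bounds `f z - f x ≤ ‖z - x‖` and `f y - f z ≤ ‖y - z‖` trap `f z` between `f x` and `f y`. -/

section Antipodal

variable {X : Type*} [NormedAddCommGroup X] [NormedSpace ℝ X]

theorem exists_norm_le_one_apply_sub_eq_norm_sub (x y : X) :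
    ∃ f : X →L[ℝ] ℝ, ‖f‖ ≤ 1 ∧ f y - f x = ‖y - x‖ := by
  obtain ⟨f, hf, hfyx⟩ := exists_dual_vector'' ℝ (y - x)
  exact ⟨f, hf, by rwa [map_sub] at hfyx⟩

theorem apply_sub_le_norm_sub {f : X →L[ℝ] ℝ} (hf : ‖f‖ ≤ 1) (x y : X) :
    f y - f x ≤ ‖y - x‖ :=
  calc f y - f x = f (y - x) := (map_sub f y x).symm
    _ ≤ ‖f (y - x)‖ := Real.le_norm_self _
    _ ≤ ‖f‖ * ‖y - x‖ := f.le_opNorm _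
    _ ≤ ‖y - x‖ := mul_le_of_le_one_left (norm_nonneg _) hf

theorem exists_antipodal_functional_of_diametral {S : Set X} {x y : X}
    (hdiam : ∀ z ∈ S, ‖z - x‖ ≤ ‖y - x‖ ∧ ‖y - z‖ ≤ ‖y - x‖) :
    ∃ f : X →L[ℝ] ℝ, ‖f‖ ≤ 1 ∧ f y - f x = ‖y - x‖ ∧ ∀ z ∈ S, f x ≤ f z ∧ f z ≤ f y := by
  obtain ⟨f, hf, hfyx⟩ := exists_norm_le_one_apply_sub_eq_norm_sub x y
  refine ⟨f, hf, hfyx, fun z hz => ?_⟩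
  have hfz_sub_fx := apply_sub_le_norm_sub hf x z
  have hfy_sub_fz := apply_sub_le_norm_sub hf z y
  obtain ⟨hzx, hyz⟩ := hdiam z hz
  constructor <;> linarith

end Antipodal

theorem norm_sub_le_of_equilateral {X : Type*} [SeminormedAddGroup X] {S : Set X} {lam : ℝ}
    (hequi : ∀ x ∈ S, ∀ y ∈ S, x ≠ y → ‖x - y‖ = lam) (hlam : 0 ≤ lam)
    {x z : X} (hx : x ∈ S) (hz : z ∈ S) : ‖z - x‖ ≤ lam := by
  rcases eq_or_ne z x with rfl | hzx
  · simpa using hlam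
  · exact (hequi z hz x hx hzx).le

/-- A bounded λ-equilateral set is an (M, 1, λ)-b.s.a. set, where
M = sup{‖x‖ : x ∈ S}. -/
theorem stmt2 {X : Type*} [NormedAddCommGroup X] [NormedSpace ℝ X]
    (S : Set X) (lam M : ℝ)
    (hequi : ∀ x ∈ S, ∀ y ∈ S, x ≠ y → ‖x - y‖ = lam)
    (hM : IsLUB ((fun x : X => ‖x‖) '' S) M) :
    IsBSA X S M 1 lam := by
  refine ⟨fun x hx => hM.1 ⟨x, hx, rfl⟩, fun x hx y hy hxy => ?_⟩
  have hyx : ‖y - x‖ = lam := hequi y hy x hx hxy.symm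
  have hlam : 0 ≤ lam := hyx ▸ norm_nonneg _
  have hdiam : ∀ z ∈ S, ‖z - x‖ ≤ ‖y - x‖ ∧ ‖y - z‖ ≤ ‖y - x‖ := fun z hz =>
    hyx ▸ ⟨norm_sub_le_of_equilateral hequi hlam hx hz,
      norm_sub_le_of_equilateral hequi hlam hz hy⟩
  obtain ⟨f, hf, hfyx, hbetween⟩ := exists_antipodal_functional_of_diametral hdiam
  exact ⟨f, hf, (hfyx.trans hyx).ge, hbetween⟩
end
end

section
/- Let X be a normed space and {(x_γ, x*_γ) : γ ∈ Γ} a biorthogonal system (x*_δ(x_γ) = δ_{γδ}) with ‖x_γ‖·‖x*_γ‖ ≤ M for all γ. Then the set {x_γ/‖x_γ‖ : γ ∈ Γ} is a (1, M, 1)-bounded and separated antipodal subset of X. -/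
open Set Filter

noncomputable section

/-- A normalized biorthogonal system with ‖x_γ‖·‖x*_γ‖ ≤ M gives a
(1, M, 1)-b.s.a. set. -/
theorem stmt3 {X : Type*} [NormedAddCommGroup X] [NormedSpace ℝ X]
    {Γ : Type*} [DecidableEq Γ] (x : Γ → X) (xs : Γ → X →L[ℝ] ℝ) (M : ℝ)
    (hbi : ∀ γ δ : Γ, xs γ (x δ) = if γ = δ then (1:ℝ) else 0)
    (hne : ∀ γ, x γ ≠ 0)
    (hM : ∀ γ, ‖x γ‖ * ‖xs γ‖ ≤ M) :
    IsBSA X {y | ∃ γ, y = ‖x γ‖⁻¹ • x γ} 1 M 1 := by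
  constructor
  · rintro u ⟨γ, rfl⟩
    rw [norm_smul, norm_inv, norm_norm, inv_mul_cancel₀ (norm_ne_zero_iff.2 (hne γ))]
  · rintro u ⟨γ, rfl⟩ v ⟨δ, rfl⟩ huv
    refine ⟨‖x δ‖ • xs δ, ?_, ?_, ?_⟩
    · refine le_trans (ContinuousLinearMap.opNorm_smul_le _ _) ?_
      rw [norm_norm]; exact hM δ
    · have hγδ : γ ≠ δ := fun h => huv (by rw [h])
      have h1 : (‖x δ‖ • xs δ) (‖x δ‖⁻¹ • x δ) = 1 := by
        simp [hbi δ δ, inv_mul_cancel₀ (norm_ne_zero_iff.2 (hne δ))]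
      have h0 : (‖x δ‖ • xs δ) (‖x γ‖⁻¹ • x γ) = 0 := by
        simp [hbi δ γ, Ne.symm hγδ]
      rw [h1, h0]; norm_num
    · rintro z ⟨ε, rfl⟩
      have hγδ : γ ≠ δ := fun h => huv (by rw [h])
      have h1 : (‖x δ‖ • xs δ) (‖x δ‖⁻¹ • x δ) = 1 := by
        simp [hbi δ δ, inv_mul_cancel₀ (norm_ne_zero_iff.2 (hne δ))]
      have h0 : (‖x δ‖ • xs δ) (‖x γ‖⁻¹ • x γ) = 0 := by
        simp [hbi δ γ, Ne.symm hγδ]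
      have hz : (‖x δ‖ • xs δ) (‖x ε‖⁻¹ • x ε) = if δ = ε then 1 else 0 := by
        by_cases h : δ = ε
        · subst h; simp [h1]
        · simp [hbi δ ε, h]
      rw [h0, h1, hz]
      split <;> norm_num
end
end

section
/- Let X be a Banach space whose dual X* is strictly convex, and let {(x_i, x*_i) : i ∈ ℕ} be an Auerbach system in X (‖x_i‖ = ‖x*_i‖ = 1 and x*_i(x_j) = δ_{ij}). Then for every i ≠ j there exists f ∈ X* with ‖f‖ = 1 such that f(x_i) - f(x_j) > 1 and f(x_j) ≤ f(x_k) ≤ f(x_i) for all k ∈ ℕ. -/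
open Set Filter

noncomputable section

/-- If X* is strictly convex and {(x_i, x*_i)} is an Auerbach system, then any
two distinct x_i, x_j are separated by a norm-one functional with gap > 1. -/
theorem stmt6 {X : Type*} [NormedAddCommGroup X] [NormedSpace ℝ X]
    [CompleteSpace X] [StrictConvexSpace ℝ (X →L[ℝ] ℝ)]
    (x : ℕ → X) (xs : ℕ → X →L[ℝ] ℝ)
    (hx : ∀ i, ‖x i‖ = 1) (hxs : ∀ i, ‖xs i‖ = 1)
    (hbi : ∀ i j : ℕ, xs i (x j) = if i = j then (1:ℝ) else 0) :
    ∀ i j : ℕ, i ≠ j → ∃ f : X →L[ℝ] ℝ, ‖f‖ = 1 ∧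
      1 < f (x i) - f (x j) ∧ ∀ k : ℕ, f (x j) ≤ f (x k) ∧ f (x k) ≤ f (x i) := by
  intro i j hij
  set g : X →L[ℝ] ℝ := xs i - xs j with hg
  have hgne : (xs i) ≠ -(xs j) := by
    intro h
    have := hbi i i
    rw [h] at this
    simp [hbi j i, hij.symm] at this
  have hN2 : ‖g‖ < 2 := by
    have : ¬ SameRay ℝ (xs i) (-(xs j)) := by
      rw [not_sameRay_iff_of_norm_eq (by simp [hxs])]
      exact hgne
    have h2 := norm_add_lt_of_not_sameRay this
    rw [hg]
    rw [sub_eq_add_neg]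
    calc ‖xs i + -xs j‖ < ‖xs i‖ + ‖-xs j‖ := h2
    _ = 2 := by rw [hxs, norm_neg, hxs]; norm_num
  have hNpos : 0 < ‖g‖ := by
    rw [norm_pos_iff]
    intro h
    have : g (x i) = 0 := by rw [h]; rfl
    simp [hg, hbi i i, hbi j i, hij.symm] at this
  refine ⟨‖g‖⁻¹ • g, ?_, ?_, ?_⟩
  · rw [norm_smul ‖g‖⁻¹ g]
    simp [abs_of_pos (inv_pos.2 hNpos), inv_mul_cancel₀ hNpos.ne']
  · have hgi : g (x i) = 1 := by simp [hg, hbi i i, hbi j i, hij.symm]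
    have hgj : g (x j) = -1 := by simp [hg, hbi i j, hbi j j, hij]
    simp only [ContinuousLinearMap.smul_apply, hgi, hgj, smul_eq_mul]
    rw [mul_one, mul_neg_one, sub_neg_eq_add, ← two_mul]
    have hc : ‖g‖⁻¹ * ‖g‖ = 1 := inv_mul_cancel₀ hNpos.ne'
    nlinarith [hNpos, hN2]
  · intro k
    have hgi : g (x i) = 1 := by simp [hg, hbi i i, hbi j i, hij.symm]
    have hgj : g (x j) = -1 := by simp [hg, hbi i j, hbi j j, hij]
    have hgk : -1 ≤ g (x k) ∧ g (x k) ≤ 1 := by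
      rcases eq_or_ne k i with rfl | hki
      · simp [hgi]
      rcases eq_or_ne k j with rfl | hkj
      · simp [hgj]
      · constructor <;> norm_num [hg, hbi, Ne.symm hki, Ne.symm hkj]
    have hinv : (0:ℝ) < ‖g‖⁻¹ := by positivity
    simp only [ContinuousLinearMap.smul_apply, hgi, hgj, smul_eq_mul]
    constructor
    · exact mul_le_mul_of_nonneg_left hgk.1 hinv.le |>.trans_eq' (by ring_nf)
    · exact (mul_le_mul_of_nonneg_left hgk.2 hinv.le)
end
end

section
/- Let X be a uniformly smooth infinite-dimensional Banach space. Then K_a(X) > 1: there exist an infinite subset S of the unit ball of X and d > 1 such that for every pair of distinct x, y ∈ S there is f in the dual unit ball with d ≤ f(x) - f(y) and f(y) ≤ f(z) ≤ f(x) for all z ∈ S. -/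
open Set Filter

noncomputable section

/-! Work in the uniformly convex dual. Infinite dimensionality yields unit vectors `Z n` and
functionals `G n` in the dual unit ball with `G n (Z n) = 1` and `G m (Z n) = 0` for `m < n`.
Along a subsequence chosen from a weak* cluster point `h` of the `G n`, every `G t (Z s)` with
`s < t` is within `ε` of `γ s = h (Z s)`. Uniform convexity of the dual then gives
`‖G t - G s‖ ≤ 2 - δ` and `γ s ≥ -1 + δ/2 - ε`, and it forces `γ s < 2ε` eventually: otherwise a
sum of `2 ^ m` consecutive `G n` would have norm at least `2 ^ m ε` and, halving `m` times, at most
`(2 - δ) ^ m`. For `p < q` the functional `(G q - G p) / (2 - δ)` then lies in the dual unit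
ball, is smallest at `Z p` and largest at `Z q` on the whole sequence, and takes values there
that are `(2 - 3ε) / (2 - δ) > 1` apart. -/

-- `δ / 2` bounds the modulus of convexity at `ε` from below, in a form homogeneous in the radius.
def IsConvexityBound (E : Type*) [NormedAddCommGroup E] (ε δ : ℝ) : Prop :=
  ∀ ⦃c : ℝ⦄ ⦃x y : E⦄, ‖x‖ ≤ c → ‖y‖ ≤ c → ε * c ≤ ‖x - y‖ → ‖x + y‖ ≤ (2 - δ) * c

theorem exists_isConvexityBound (E : Type*) [NormedAddCommGroup E] [NormedSpace ℝ E]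
    [UniformConvexSpace E] {ε : ℝ} (hε : 0 < ε) :
    ∃ δ, 0 < δ ∧ δ ≤ 1 ∧ IsConvexityBound E ε δ := by
  obtain ⟨δ, hδ, h⟩ := exists_forall_closed_ball_dist_add_le_two_sub E hε
  refine ⟨min δ 1, lt_min hδ one_pos, min_le_right _ _, fun c x y hx hy hxy => ?_⟩
  obtain hc | hc := ((norm_nonneg x).trans hx).eq_or_lt
  · simp [norm_le_zero_iff.mp (hc ▸ hx), norm_le_zero_iff.mp (hc ▸ hy), ← hc]
  have hscale : ∀ z : E, ‖c⁻¹ • z‖ = ‖z‖ / c := fun z => by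
    rw [norm_smul_of_nonneg (inv_nonneg.2 hc.le), inv_mul_eq_div]
  have := h (x := c⁻¹ • x) (y := c⁻¹ • y) (by rw [hscale, div_le_one hc]; exact hx)
    (by rw [hscale, div_le_one hc]; exact hy)
    (by rw [← smul_sub, hscale, le_div_iff₀ hc]; exact hxy)
  rw [← smul_add, hscale, div_le_iff₀ hc] at this
  nlinarith [min_le_left δ 1]

section

variable {X : Type*} [NormedAddCommGroup X] [NormedSpace ℝ X]

theorem abs_apply_le_one {f : X →L[ℝ] ℝ} (hf : ‖f‖ ≤ 1) {x : X} (hx : ‖x‖ ≤ 1) : |f x| ≤ 1 :=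
  (f.unit_le_opNorm x hx).trans hf

theorem le_opNorm_of_le_abs_apply {f : X →L[ℝ] ℝ} {x : X} (hx : ‖x‖ ≤ 1) {a : ℝ}
    (h : a ≤ |f x|) : a ≤ ‖f‖ :=
  h.trans (f.unit_le_opNorm x hx)

theorem exists_norm_eq_one_forall_apply_eq_zero (hinf : ¬FiniteDimensional ℝ X)
    (s : Finset (X →L[ℝ] ℝ)) : ∃ y : X, ‖y‖ = 1 ∧ ∀ f ∈ s, f y = 0 := by
  let Φ : X →ₗ[ℝ] (s → ℝ) := LinearMap.pi fun f => (f : X →L[ℝ] ℝ).toLinearMap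
  have hker : LinearMap.ker Φ ≠ ⊥ := fun h =>
    hinf (FiniteDimensional.of_injective Φ (LinearMap.ker_eq_bot.mp h))
  obtain ⟨z, hz, hz0⟩ := Submodule.exists_mem_ne_zero_of_ne_bot hker
  refine ⟨‖z‖⁻¹ • z, by simpa using norm_smul_inv_norm (𝕜 := ℝ) hz0, fun f hf => ?_⟩
  have hfz : f z = 0 := congr_fun (LinearMap.mem_ker.mp hz) ⟨f, hf⟩
  simp [hfz]

theorem exists_forall_frequently_abs_sub_lt {F : ℕ → X →L[ℝ] ℝ} (hF : ∀ n, ‖F n‖ ≤ 1) :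
    ∃ h : X →L[ℝ] ℝ, ∀ (s : Finset X) ⦃ε : ℝ⦄, 0 < ε →
      ∃ᶠ n in atTop, ∀ x ∈ s, |F n x - h x| < ε := by
  obtain ⟨φ, -, hφ⟩ := (WeakDual.isCompact_closedBall (0 : X →L[ℝ] ℝ) 1).exists_clusterPt
    (f := map (fun n => StrongDual.toWeakDual (F n)) atTop)
    (tendsto_principal.2 (.of_forall fun n => by simpa using hF n))
  refine ⟨WeakDual.toStrongDual φ, fun s ε hε => ?_⟩
  refine (mapClusterPt_iff_frequently.1 hφ {ψ | ∀ x ∈ s, dist (ψ x) (φ x) < ε} ?_).mono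
    fun n hn x hx => by simpa [Real.dist_eq] using hn x hx
  exact eventually_all_finset s |>.2 fun x _ =>
    Metric.tendsto_nhds.1 ((WeakDual.eval_continuous x).tendsto φ) ε hε

theorem exists_strictMono_abs_sub_le {F : ℕ → X →L[ℝ] ℝ} (hF : ∀ n, ‖F n‖ ≤ 1) (Y : ℕ → X)
    {ε : ℝ} (hε : 0 < ε) : ∃ (h : X →L[ℝ] ℝ) (g : ℕ → ℕ), StrictMono g ∧
      ∀ ⦃s t⦄, s < t → |F (g t) (Y (g s)) - h (Y (g s))| ≤ ε := by
  classical
  obtain ⟨h, hh⟩ := exists_forall_frequently_abs_sub_lt hF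
  obtain ⟨g, -, hg⟩ := exists_seq_of_forall_finset_exists (fun _ => True)
    (fun a b => a < b ∧ |F b (Y a) - h (Y a)| ≤ ε) fun s _ => by
      obtain ⟨n, hs, hn⟩ :=
        ((hh (s.image Y) hε).and_eventually (eventually_gt_atTop (s.sup id))).exists
      exact ⟨n, trivial, fun a ha => ⟨(Finset.le_sup (f := id) ha).trans_lt hn,
        (hs (Y a) (Finset.mem_image_of_mem Y ha)).le⟩⟩
  exact ⟨h, g, fun a b hab => (hg a b hab).1, fun s t hst => (hg s t hst).2⟩

structure IsTriangularSystem (Z : ℕ → X) (G : ℕ → X →L[ℝ] ℝ) : Prop where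
  norm_eq_one : ∀ n, ‖Z n‖ = 1
  norm_le_one : ∀ n, ‖G n‖ ≤ 1
  apply_self : ∀ n, G n (Z n) = 1
  apply_of_lt : ∀ ⦃m n⦄, m < n → G m (Z n) = 0

theorem exists_isTriangularSystem (hinf : ¬FiniteDimensional ℝ X) :
    ∃ (Z : ℕ → X) (G : ℕ → X →L[ℝ] ℝ), IsTriangularSystem Z G := by
  classical
  obtain ⟨v, hv, hvv⟩ := exists_seq_of_forall_finset_exists
    (fun v : X × (X →L[ℝ] ℝ) => ‖v.1‖ = 1 ∧ ‖v.2‖ ≤ 1 ∧ v.2 v.1 = 1) (fun v w => v.2 w.1 = 0)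
    fun s _ => by
      obtain ⟨y, hy, hys⟩ := exists_norm_eq_one_forall_apply_eq_zero hinf (s.image Prod.snd)
      obtain ⟨f, hf, hfy⟩ := exists_dual_vector ℝ y (by simp [hy])
      exact ⟨(y, f), ⟨hy, hf.le, by simp [hfy, hy]⟩,
        fun v hv => hys _ (Finset.mem_image_of_mem _ hv)⟩
  exact ⟨fun n => (v n).1, fun n => (v n).2,
    ⟨fun n => (hv n).1, fun n => (hv n).2.1, fun n => (hv n).2.2, fun m n h => hvv m n h⟩⟩

namespace IsTriangularSystem

variable {Z : ℕ → X} {G : ℕ → X →L[ℝ] ℝ}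

theorem comp (hZG : IsTriangularSystem Z G) {φ : ℕ → ℕ} (hφ : StrictMono φ) :
    IsTriangularSystem (Z ∘ φ) (G ∘ φ) :=
  ⟨fun _ => hZG.norm_eq_one _, fun _ => hZG.norm_le_one _, fun _ => hZG.apply_self _,
    fun _ _ h => hZG.apply_of_lt (hφ h)⟩

theorem injective (hZG : IsTriangularSystem Z G) : Function.Injective Z :=
  .of_lt_imp_ne fun m n hmn h => by
    have h0 := hZG.apply_of_lt hmn
    rw [← h, hZG.apply_self] at h0
    exact one_ne_zero h0

theorem abs_apply_le_one (hZG : IsTriangularSystem Z G) (m n : ℕ) : |G m (Z n)| ≤ 1 :=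
  _root_.abs_apply_le_one (hZG.norm_le_one m) (hZG.norm_eq_one n).le

theorem norm_sub_le (hZG : IsTriangularSystem Z G) {δ : ℝ}
    (hconv : IsConvexityBound (X →L[ℝ] ℝ) 1 δ) {s t : ℕ} (hst : s < t) :
    ‖G t - G s‖ ≤ 2 - δ := by
  have hsep : 1 * 1 ≤ ‖G s - -G t‖ := le_opNorm_of_le_abs_apply (hZG.norm_eq_one t).le
    (by simp [hZG.apply_self, hZG.apply_of_lt hst])
  have := hconv (hZG.norm_le_one s) (by rw [norm_neg]; exact hZG.norm_le_one t) hsep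
  rwa [mul_one, ← sub_eq_add_neg, norm_sub_rev] at this

theorem neg_two_sub_le_apply_add_apply (hZG : IsTriangularSystem Z G) {δ : ℝ}
    (hconv : IsConvexityBound (X →L[ℝ] ℝ) 1 δ) {t u : ℕ} (htu : t < u) (s : ℕ) :
    -(2 - δ) ≤ G t (Z s) + G u (Z s) := by
  have hsep : 1 * 1 ≤ ‖G t - G u‖ := le_opNorm_of_le_abs_apply (hZG.norm_eq_one u).le
    (by simp [hZG.apply_self, hZG.apply_of_lt htu])
  have hnorm := hconv (hZG.norm_le_one t) (hZG.norm_le_one u) hsep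
  have hval := (G t + G u).unit_le_opNorm (Z s) (hZG.norm_eq_one s).le
  rw [Real.norm_eq_abs, add_apply] at hval
  linarith [neg_abs_le (G t (Z s) + G u (Z s))]

theorem le_apply_sum_Ico (hZG : IsTriangularSystem Z G) {θ : ℝ}
    (hθ : ∀ ⦃s t⦄, s < t → θ ≤ G t (Z s)) (a k : ℕ) :
    k * θ ≤ (∑ n ∈ Finset.Ico a (a + k), G n) (Z a) := by
  have hθ1 : θ ≤ 1 :=
    (hθ zero_lt_one).trans ((le_abs_self _).trans (hZG.abs_apply_le_one 1 0))
  have := Finset.card_nsmul_le_sum (Finset.Ico a (a + k)) (fun n => G n (Z a)) θ fun n hn => by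
    obtain rfl | han := (Finset.mem_Ico.1 hn).1.eq_or_lt
    · rwa [hZG.apply_self]
    · exact hθ han
  simpa [sum_apply] using this

theorem sum_Ico_apply_eq_zero (hZG : IsTriangularSystem Z G) {a b q : ℕ} (hbq : b ≤ q) :
    (∑ n ∈ Finset.Ico a b, G n) (Z q) = 0 := by
  rw [sum_apply]
  exact Finset.sum_eq_zero fun n hn => hZG.apply_of_lt ((Finset.mem_Ico.1 hn).2.trans_le hbq)

theorem norm_sum_Ico_le (hZG : IsTriangularSystem Z G) {θ δ : ℝ}
    (hθ : ∀ ⦃s t⦄, s < t → θ ≤ G t (Z s)) (hθ0 : 0 ≤ θ)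
    (hconv : IsConvexityBound (X →L[ℝ] ℝ) θ δ) (hδ0 : 0 ≤ δ) (hδ2 : δ ≤ 2) (m : ℕ) :
    ∀ a, ‖∑ n ∈ Finset.Ico a (a + 2 ^ m), G n‖ ≤ (2 - δ) ^ m := by
  induction m with
  | zero => intro a; simpa using hZG.norm_le_one a
  | succ m ih =>
    intro a
    have hsplit : ∑ n ∈ Finset.Ico a (a + 2 ^ (m + 1)), G n =
        ∑ n ∈ Finset.Ico a (a + 2 ^ m), G n +
          ∑ n ∈ Finset.Ico (a + 2 ^ m) (a + 2 ^ m + 2 ^ m), G n := by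
      rw [Finset.sum_Ico_consecutive _ (Nat.le_add_right _ _) (Nat.le_add_right _ _), pow_succ,
        mul_two, add_assoc]
    have hsep : θ * (2 - δ) ^ m ≤ ‖∑ n ∈ Finset.Ico a (a + 2 ^ m), G n -
        ∑ n ∈ Finset.Ico (a + 2 ^ m) (a + 2 ^ m + 2 ^ m), G n‖ := by
      refine le_opNorm_of_le_abs_apply (hZG.norm_eq_one (a + 2 ^ m)).le ?_
      rw [sub_apply, hZG.sum_Ico_apply_eq_zero le_rfl, zero_sub, abs_neg]
      calc θ * (2 - δ) ^ m ≤ (2 ^ m : ℕ) * θ := by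
            push_cast; rw [mul_comm]; gcongr; linarith
        _ ≤ _ := (hZG.le_apply_sum_Ico hθ _ _).trans (le_abs_self _)
    rw [hsplit, pow_succ, mul_comm]
    exact hconv (ih a) (ih _) hsep

theorem not_forall_le_apply [UniformConvexSpace (X →L[ℝ] ℝ)] (hZG : IsTriangularSystem Z G)
    {θ : ℝ} (hθ : 0 < θ) : ¬∀ ⦃s t⦄, s < t → θ ≤ G t (Z s) := by
  intro hle
  obtain ⟨δ, hδ, hδ1, hconv⟩ := exists_isConvexityBound (X →L[ℝ] ℝ) hθ
  obtain ⟨m, hm⟩ := exists_pow_lt_of_lt_one hθ (show (2 - δ) / 2 < 1 by linarith)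
  have hgrowth : (2 ^ m : ℕ) * θ ≤ (2 - δ) ^ m := calc
    _ ≤ (∑ n ∈ Finset.Ico 0 (0 + 2 ^ m), G n) (Z 0) := hZG.le_apply_sum_Ico hle 0 (2 ^ m)
    _ ≤ ‖∑ n ∈ Finset.Ico 0 (0 + 2 ^ m), G n‖ :=
      le_opNorm_of_le_abs_apply (hZG.norm_eq_one 0).le (le_abs_self _)
    _ ≤ (2 - δ) ^ m := hZG.norm_sum_Ico_le hle hθ.le hconv hδ.le (by linarith) m 0
  rw [div_pow, div_lt_iff₀ (by positivity)] at hm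
  push_cast at hgrowth
  linarith

theorem sub_apply_mem_Icc (hZG : IsTriangularSystem Z G) {γ : ℕ → ℝ} {ε : ℝ}
    (happ : ∀ ⦃s t⦄, s < t → |G t (Z s) - γ s| ≤ ε) (hlow : ∀ s, -1 + 4 * ε ≤ γ s)
    (hup : ∀ s, γ s ≤ 2 * ε) (hε : 5 * ε ≤ 1) {p q : ℕ} (hpq : p < q) (k : ℕ) :
    (G q - G p) (Z k) ∈ Icc ((G q - G p) (Z p)) ((G q - G p) (Z q)) := by
  have hq : (G q - G p) (Z q) = 1 := by simp [hZG.apply_self, hZG.apply_of_lt hpq]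
  have hp : (G q - G p) (Z p) ≤ 3 * ε - 1 := by
    simp only [sub_apply, hZG.apply_self]
    linarith [(abs_le.1 (happ hpq)).2, hup p]
  rw [mem_Icc, hq]
  simp only [sub_apply] at hp ⊢
  rcases lt_trichotomy k p with hkp | rfl | hpk
  · have hkq := (abs_le.1 (happ (hkp.trans hpq)))
    have hkp := (abs_le.1 (happ hkp))
    constructor <;> linarith
  · constructor <;> linarith
  · rw [hZG.apply_of_lt hpk, sub_zero]
    refine ⟨?_, (le_abs_self _).trans (hZG.abs_apply_le_one q k)⟩
    rcases lt_or_ge k q with hkq | hqk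
    · linarith [(abs_le.1 (happ hkq)).1, hlow k]
    · obtain rfl | hqk := hqk.eq_or_lt
      · linarith [hZG.apply_self q]
      · linarith [hZG.apply_of_lt hqk]

end IsTriangularSystem

theorem isBSA_range_of_forall_lt {Z : ℕ → X} {d : ℝ} (hZ : ∀ n, ‖Z n‖ ≤ 1)
    (h : ∀ ⦃p q⦄, p < q → ∃ f : X →L[ℝ] ℝ, ‖f‖ ≤ 1 ∧ d ≤ f (Z q) - f (Z p) ∧
      ∀ k, f (Z p) ≤ f (Z k) ∧ f (Z k) ≤ f (Z q)) :
    IsBSA X (range Z) 1 1 d := by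
  refine ⟨forall_mem_range.2 hZ, ?_⟩
  rintro _ ⟨p, rfl⟩ _ ⟨q, rfl⟩ hpq
  rcases lt_or_gt_of_ne (ne_of_apply_ne Z hpq) with hlt | hlt
  · obtain ⟨f, hf, hd, hk⟩ := h hlt
    exact ⟨f, hf, hd, forall_mem_range.2 hk⟩
  · obtain ⟨f, hf, hd, hk⟩ := h hlt
    refine ⟨-f, by rwa [norm_neg], by simp only [neg_apply]; linarith,
      forall_mem_range.2 fun k => ?_⟩
    simp only [neg_apply, neg_le_neg_iff]
    exact (hk k).symm

theorem IsTriangularSystem.isBSA_range {Z : ℕ → X} {G : ℕ → X →L[ℝ] ℝ}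
    (hZG : IsTriangularSystem Z G) {δ ε : ℝ} (hconv : IsConvexityBound (X →L[ℝ] ℝ) 1 δ)
    (hδ : δ ≤ 1) (hεδ : 10 * ε ≤ δ) {γ : ℕ → ℝ}
    (happ : ∀ ⦃s t⦄, s < t → |G t (Z s) - γ s| ≤ ε) (hup : ∀ s, γ s ≤ 2 * ε) :
    IsBSA X (range Z) 1 1 ((2 - 3 * ε) / (2 - δ)) := by
  have hlow : ∀ s, -1 + 4 * ε ≤ γ s := fun s => by
    linarith [hZG.neg_two_sub_le_apply_add_apply hconv (Nat.lt_succ_self (s + 1)) s,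
      (abs_le.1 (happ (Nat.lt_succ_self s))).2, (abs_le.1 (happ (by omega : s < s + 2))).2]
  have hε : 0 ≤ ε := (abs_nonneg _).trans (happ zero_lt_one)
  have h2δ : 0 < 2 - δ := by linarith
  refine isBSA_range_of_forall_lt (fun n => (hZG.norm_eq_one n).le) fun p q hpq => ?_
  have hW := hZG.sub_apply_mem_Icc happ hlow hup (by linarith) hpq
  refine ⟨(2 - δ)⁻¹ • (G q - G p), ?_, ?_, fun k => ?_⟩
  · rw [norm_smul, Real.norm_of_nonneg (inv_nonneg.2 h2δ.le), inv_mul_le_iff₀ h2δ, mul_one]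
    exact hZG.norm_sub_le hconv hpq
  · have hgap : 2 - 3 * ε ≤ (G q - G p) (Z q) - (G q - G p) (Z p) := by
      simp only [sub_apply, hZG.apply_self, hZG.apply_of_lt hpq]
      linarith [(abs_le.1 (happ hpq)).2, hup p]
    simp only [smul_apply, smul_eq_mul, ← mul_sub, div_eq_inv_mul]
    gcongr
  · simp only [smul_apply, smul_eq_mul]
    exact ⟨by gcongr; exact (hW k).1, by gcongr; exact (hW k).2⟩

theorem exists_infinite_isBSA_one_lt [UniformConvexSpace (X →L[ℝ] ℝ)]
    (hinf : ¬FiniteDimensional ℝ X) :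
    ∃ S : Set X, S.Infinite ∧ ∃ d : ℝ, 1 < d ∧ IsBSA X S 1 1 d := by
  obtain ⟨δ, hδ, hδ1, hconv⟩ := exists_isConvexityBound (X →L[ℝ] ℝ) one_pos
  obtain ⟨Y, F, hYF⟩ := exists_isTriangularSystem hinf
  obtain ⟨h, g, hg, happ⟩ := exists_strictMono_abs_sub_le hYF.norm_le_one Y
    (by positivity : 0 < δ / 10)
  have hZG := hYF.comp hg
  have hsmall : ∀ᶠ s in atTop, h (Y (g s)) ≤ 2 * (δ / 10) := by
    by_contra hbig
    obtain ⟨φ, hφ, hφbig⟩ := extraction_of_frequently_atTop (not_eventually.1 hbig)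
    refine (hZG.comp hφ).not_forall_le_apply (by positivity : 0 < δ / 10) fun s t hst => ?_
    simp only [Function.comp_apply]
    linarith [(abs_le.1 (happ (hφ hst))).1, not_le.1 (hφbig s)]
  obtain ⟨N, hN⟩ := eventually_atTop.1 hsmall
  have hshift := hZG.comp (fun _ _ h => Nat.add_lt_add_left h N : StrictMono (N + ·))
  refine ⟨_, infinite_range_of_injective hshift.injective, _, ?_,
    hshift.isBSA_range hconv hδ1 (by linarith) (γ := fun s => h (Y (g (N + s))))
      (fun s t hst => happ (by omega)) fun s => hN _ (by omega)⟩
  rw [one_lt_div (by linarith)]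
  linarith

theorem IsBSA.le_two {S : Set X} {d : ℝ} (hS : IsBSA X S 1 1 d) (hS2 : S.Nontrivial) :
    d ≤ 2 := by
  obtain ⟨x, hx, y, hy, hxy⟩ := hS2
  obtain ⟨f, hf, hd, -⟩ := hS.2 x hx y hy hxy
  linarith [abs_le.1 (abs_apply_le_one hf (hS.1 x hx)),
    abs_le.1 (abs_apply_le_one hf (hS.1 y hy))]

theorem le_Ka {S : Set X} {d : ℝ} (hS : S.Infinite) (hSd : IsBSA X S 1 1 d) : d ≤ Ka X :=
  le_csSup ⟨2, fun _ ⟨_, hT, hTd⟩ => hTd.le_two hT.nontrivial⟩ ⟨S, hS, hSd⟩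

end

theorem stmt7_general {X : Type*} [NormedAddCommGroup X] [NormedSpace ℝ X]
    [UniformConvexSpace (X →L[ℝ] ℝ)]
    (hinf : ¬FiniteDimensional ℝ X) :
    1 < Ka X ∧ ∃ S : Set X, S.Infinite ∧ ∃ d : ℝ, 1 < d ∧ IsBSA X S 1 1 d := by
  obtain ⟨S, hS, d, hd, hSd⟩ := exists_infinite_isBSA_one_lt hinf
  exact ⟨hd.trans_le (le_Ka hS hSd), S, hS, d, hd, hSd⟩

/-- If X is an infinite-dimensional uniformly smooth Banach space (i.e. its
dual is uniformly convex), then K_a(X) > 1. -/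
theorem stmt7 {X : Type*} [NormedAddCommGroup X] [NormedSpace ℝ X]
    [CompleteSpace X] [UniformConvexSpace (X →L[ℝ] ℝ)]
    (hinf : ¬FiniteDimensional ℝ X) :
    1 < Ka X ∧ ∃ S : Set X, S.Infinite ∧ ∃ d : ℝ, 1 < d ∧ IsBSA X S 1 1 d :=
  stmt7_general hinf
end
end

section
/- Let X* be a uniformly convex dual of a Banach space X and {(x_i, x*_i) : i ∈ ℕ} an Auerbach system in X. Define λ_{ij} = 1/‖(x*_i - x*_j)/2‖ for i ≠ j. Then there is no infinite subset M of ℕ along which λ_{i j} → 1 as i < j tend to infinity in M; in fact there exist c > 1 and an infinite M ⊆ ℕ with λ_{ij} ≥ c for all i < j in M. -/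
open Set Filter

noncomputable section

/-- If X* is uniformly convex and {(x_i, x*_i)} is an Auerbach system, then the
quantities λ_{ij} = 1/‖(x*_i - x*_j)/2‖ stay bounded away from 1 along some
infinite subset M of ℕ. -/
theorem stmt8 {X : Type*} [NormedAddCommGroup X] [NormedSpace ℝ X]
    [CompleteSpace X] [UniformConvexSpace (X →L[ℝ] ℝ)]
    (x : ℕ → X) (xs : ℕ → X →L[ℝ] ℝ)
    (hx : ∀ i, ‖x i‖ = 1) (hxs : ∀ i, ‖xs i‖ = 1)
    (hbi : ∀ i j : ℕ, xs i (x j) = if i = j then (1:ℝ) else 0) :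
    ∃ c : ℝ, 1 < c ∧ ∃ M : Set ℕ, M.Infinite ∧
      ∀ i ∈ M, ∀ j ∈ M, i < j →
        c ≤ 1 / ‖(2:ℝ)⁻¹ • (xs i - xs j)‖ := by
  obtain ⟨δ, hδ, hC⟩ := exists_forall_sphere_dist_add_le_two_sub (X →L[ℝ] ℝ) (ε := 1) one_pos
  set δ' := min δ 1 with hδ'def
  have hδ'0 : 0 < δ' := lt_min hδ one_pos
  have hδ'1 : δ' ≤ 1 := min_le_right _ _
  have hden : 0 < 1 - δ' / 2 := by linarith
  refine ⟨1 / (1 - δ' / 2), ?_, Set.univ, Set.infinite_univ, ?_⟩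
  · rw [lt_div_iff₀ hden]; linarith
  · intro i _ j _ hij
    have hne : i ≠ j := hij.ne
    -- ‖xs i + xs j‖ ≥ 1
    have h1 : (1 : ℝ) ≤ ‖xs i + xs j‖ := by
      have heval : (xs i + xs j) (x i) = 1 := by
        simp [hbi i i, hbi j i, hne.symm]
      have := (xs i + xs j).le_opNorm (x i)
      rw [hx i, mul_one] at this
      calc (1 : ℝ) = (xs i + xs j) (x i) := heval.symm
        _ ≤ ‖(xs i + xs j) (x i)‖ := le_abs_self _
        _ ≤ ‖xs i + xs j‖ := this
    have h2 : ‖xs i - xs j‖ ≤ 2 - δ := by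
      have := hC (hxs i) (x := xs i) (y := -(xs j)) (by rw [norm_neg]; exact hxs j)
        (by rwa [sub_neg_eq_add])
      simpa [sub_eq_add_neg] using this
    have h3 : ‖(2:ℝ)⁻¹ • (xs i - xs j)‖ ≤ 1 - δ' / 2 := by
      rw [norm_smul ((2:ℝ)⁻¹) (xs i - xs j), Real.norm_eq_abs, abs_of_pos (by norm_num : (0:ℝ) < 2⁻¹)]
      have : δ' ≤ δ := min_le_left _ _
      nlinarith [norm_nonneg (xs i - xs j)]
    have h4 : (0:ℝ) < ‖(2:ℝ)⁻¹ • (xs i - xs j)‖ := by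
      have heval : ((2:ℝ)⁻¹ • (xs i - xs j)) (x i) = 2⁻¹ := by
        simp [hbi i i, hbi j i, hne.symm]
      have := ((2:ℝ)⁻¹ • (xs i - xs j)).le_opNorm (x i)
      rw [hx i, mul_one, heval] at this
      have := le_trans (le_abs_self _) this
      linarith
    calc 1 / (1 - δ' / 2) ≤ 1 / ‖(2:ℝ)⁻¹ • (xs i - xs j)‖ :=
      one_div_le_one_div_of_le h4 h3
end
end

section
/- Let X be a smooth Banach space of finite dimension n. Then X contains a (1,1,d)-bounded and separated antipodal set with d > 1 of cardinality 2n. In particular, if {(x_i, x*_i) : 1 ≤ i ≤ n} is an Auerbach basis, the set {±x_i : 1 ≤ i ≤ n} is such a set. -/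
open Set Filter

noncomputable section

/-- A smooth n-dimensional Banach space contains a (1,1,d)-b.s.a. set with
d > 1 of cardinality 2n; namely {±x_i} for an Auerbach basis {(x_i, x*_i)}. -/
theorem stmt9 {X : Type*} [NormedAddCommGroup X] [NormedSpace ℝ X]
    [FiniteDimensional ℝ X] (n : ℕ) (hn : Module.finrank ℝ X = n)
    [StrictConvexSpace ℝ (X →L[ℝ] ℝ)]
    (x : Fin n → X) (xs : Fin n → X →L[ℝ] ℝ)
    (hx : ∀ i, ‖x i‖ = 1) (hxs : ∀ i, ‖xs i‖ = 1)
    (hbi : ∀ i j, xs i (x j) = if i = j then (1:ℝ) else 0) :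
    ∃ d : ℝ, 1 < d ∧
      IsBSA X {y | ∃ i, y = x i ∨ y = -x i} 1 1 d ∧
      ({y | ∃ i, y = x i ∨ y = -x i} : Set X).ncard = 2 * n := by
  classical
  set c : Bool → ℝ := fun b => if b then 1 else -1 with hc
  have habs : ∀ b, |c b| = 1 := by intro b; cases b <;> norm_num [hc]
  have hc0 : ∀ b, c b ≠ 0 := by intro b; cases b <;> norm_num [hc]
  have hcsq : ∀ b, c b * c b = 1 := by intro b; cases b <;> norm_num [hc]
  set S : Set X := {y | ∃ i, y = x i ∨ y = -x i} with hSdef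
  have hmem : ∀ y ∈ S, ∃ (i : Fin n) (b : Bool), y = c b • x i := by
    rintro y ⟨i, h | h⟩
    · exact ⟨i, true, by simp [hc, h]⟩
    · exact ⟨i, false, by simp [hc, h]⟩
  have hnormx : ∀ (i : Fin n) (b : Bool), ‖c b • x i‖ = 1 := by
    intro i b; rw [norm_smul (c b) (x i), Real.norm_eq_abs, habs, hx, mul_one]
  have hnormxs : ∀ (i : Fin n) (b : Bool), ‖c b • xs i‖ = 1 := by
    intro i b; rw [norm_smul (c b) (xs i), Real.norm_eq_abs, habs, hxs, mul_one]
  -- strict convexity key fact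
  have key : ∀ (i j : Fin n) (b b' : Bool), i ≠ j →
      ‖c b' • xs j - c b • xs i‖ < 2 := by
    intro i j b b' hij
    have ha : ‖c b' • xs j‖ = 1 := hnormxs j b'
    have hb : ‖-(c b • xs i)‖ = 1 := by rw [norm_neg]; exact hnormxs i b
    have hray : ¬ SameRay ℝ (c b' • xs j) (-(c b • xs i)) := by
      intro h
      obtain ⟨r₁, r₂, hr₁, hr₂, heq⟩ := h.exists_pos
        (by intro h0; rw [h0] at ha; simp at ha)
        (by intro h0; rw [h0] at hb; simp at hb)
      have h2 : (r₁ • c b' • xs j) (x i) = (r₂ • -(c b • xs i)) (x i) := by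
        rw [heq]
      simp only [ContinuousLinearMap.smul_apply, ContinuousLinearMap.neg_apply,
        smul_eq_mul, hbi, if_true, mul_one, mul_zero] at h2
      rw [if_neg (fun h0 : j = i => hij h0.symm), mul_zero, mul_zero] at h2
      rcases mul_eq_zero.1 h2.symm with h4 | h4
      · exact absurd h4 (ne_of_gt hr₂)
      · exact hc0 b (neg_eq_zero.1 h4)
    have h2 := norm_add_lt_of_not_sameRay hray
    rw [ha, hb, ← sub_eq_add_neg] at h2
    linarith
  -- the max of the difference norms
  set F : Fin n × Fin n × Bool × Bool → ℝ :=
    fun p => ‖c p.2.2.2 • xs p.2.1 - c p.2.2.1 • xs p.1‖ with hF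
  set s : Finset (Fin n × Fin n × Bool × Bool) :=
    Finset.univ.filter (fun p => p.1 ≠ p.2.1) with hs
  set t : Finset ℝ := insert (1:ℝ) (s.image F) with ht
  have htne : t.Nonempty := ⟨1, Finset.mem_insert_self _ _⟩
  set M : ℝ := t.max' htne with hM
  have hM1 : 1 ≤ M := Finset.le_max' t 1 (Finset.mem_insert_self _ _)
  have hM0 : 0 < M := lt_of_lt_of_le one_pos hM1
  have hM2 : M < 2 := by
    have hmm := t.max'_mem htne
    rw [← hM] at hmm
    rcases Finset.mem_insert.1 hmm with h | h
    · rw [h]; norm_num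
    · obtain ⟨p, hp, hpF⟩ := Finset.mem_image.1 h
      rw [← hpF]
      exact key p.1 p.2.1 p.2.2.1 p.2.2.2 (Finset.mem_filter.1 hp).2
  refine ⟨2 / M, (one_lt_div hM0).2 hM2, ⟨?_, ?_⟩, ?_⟩
  · -- bounded by 1
    intro y hy
    obtain ⟨i, b, rfl⟩ := hmem y hy
    rw [hnormx]
  · -- separation
    intro u hu v hv huv
    obtain ⟨i, b, rfl⟩ := hmem u hu
    obtain ⟨j, b', rfl⟩ := hmem v hv
    by_cases hij : i = j
    · -- antipodal pair
      subst hij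
      have hne : c b ≠ c b' := fun h => huv (by rw [h])
      have hbb : c b = - c b' := by
        cases b <;> cases b' <;> first
          | exact absurd rfl hne
          | norm_num [hc]
      have h1 : (c b' • xs i) (c b' • x i) = 1 := by
        simp only [ContinuousLinearMap.smul_apply, map_smul, smul_eq_mul, hbi,
          if_true, mul_one]
        exact hcsq b'
      have h2 : (c b' • xs i) (c b • x i) = -1 := by
        simp only [ContinuousLinearMap.smul_apply, map_smul, smul_eq_mul, hbi,
          if_true, mul_one, hbb]
        rw [neg_mul, hcsq]
      refine ⟨c b' • xs i, le_of_eq (hnormxs i b'), ?_, ?_⟩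
      · rw [h1, h2]
        have hd2 : 2 / M ≤ 2 := div_le_self (by norm_num) hM1
        linarith
      · intro z hz
        obtain ⟨k, b'', rfl⟩ := hmem z hz
        have h3 : |(c b' • xs i) (c b'' • x k)| ≤ 1 := by
          simp only [ContinuousLinearMap.smul_apply, map_smul, smul_eq_mul, hbi]
          rw [mul_ite, mul_ite, mul_one, mul_zero, mul_zero]
          split_ifs
          · rw [abs_mul, habs, habs, mul_one]
          · norm_num
        rw [h1, h2]
        exact abs_le.1 h3
    · -- distinct indices
      set g : X →L[ℝ] ℝ := c b' • xs j - c b • xs i with hg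
      have hgev : ∀ (k : Fin n) (b'' : Bool), g (c b'' • x k) =
          c b' * c b'' * (if j = k then 1 else 0)
          - c b * c b'' * (if i = k then 1 else 0) := by
        intro k b''
        simp only [hg, ContinuousLinearMap.sub_apply, ContinuousLinearMap.smul_apply,
          map_smul, smul_eq_mul, hbi]
        split_ifs <;> ring
      have hgu : g (c b • x i) = -1 := by
        rw [hgev, if_neg (fun h0 : j = i => hij h0.symm), if_pos rfl]
        rw [mul_zero, mul_one, hcsq]
        ring
      have hgv : g (c b' • x j) = 1 := by
        rw [hgev, if_pos rfl, if_neg hij, mul_zero, mul_one, hcsq]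
        ring
      set N : ℝ := ‖g‖ with hN
      have hN1 : 1 ≤ N := by
        have h5 := g.le_opNorm (c b' • x j)
        rw [hgv, hnormx, mul_one] at h5
        simpa using h5
      have hN0 : 0 < N := lt_of_lt_of_le one_pos hN1
      have hNi : (0:ℝ) < N⁻¹ := inv_pos.2 hN0
      have hNM : N ≤ M := by
        apply Finset.le_max'
        rw [ht]
        exact Finset.mem_insert_of_mem (Finset.mem_image.2
          ⟨(i, j, b, b'), Finset.mem_filter.2 ⟨Finset.mem_univ _, hij⟩, rfl⟩)
      have e1 : (N⁻¹ • g) (c b • x i) = N⁻¹ * (-1) := by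
        rw [ContinuousLinearMap.smul_apply, hgu, smul_eq_mul]
      have e2 : (N⁻¹ • g) (c b' • x j) = N⁻¹ * 1 := by
        rw [ContinuousLinearMap.smul_apply, hgv, smul_eq_mul]
      refine ⟨N⁻¹ • g, ?_, ?_, ?_⟩
      · rw [norm_smul (N⁻¹) g, Real.norm_eq_abs, abs_of_pos hNi, ← hN,
          inv_mul_cancel₀ (ne_of_gt hN0)]
      · rw [e1, e2]
        have h6 : N⁻¹ * 1 - N⁻¹ * (-1) = 2 / N := by
          field_simp
          norm_num
        rw [h6]
        gcongr
      · intro z hz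
        obtain ⟨k, b'', rfl⟩ := hmem z hz
        have hbz : |g (c b'' • x k)| ≤ 1 := by
          rw [hgev]
          rcases eq_or_ne j k with h | h
          · rw [if_pos h, if_neg (fun h0 : i = k => hij (h0.trans h.symm))]
            rw [mul_zero, sub_zero, mul_one, abs_mul, habs, habs, mul_one]
          · rw [if_neg h, mul_zero, zero_sub, abs_neg]
            split_ifs
            · rw [mul_one, abs_mul, habs, habs, mul_one]
            · simp
        have e3 : (N⁻¹ • g) (c b'' • x k) = N⁻¹ * g (c b'' • x k) := by
          rw [ContinuousLinearMap.smul_apply, smul_eq_mul]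
        rw [e1, e2, e3]
        exact ⟨mul_le_mul_of_nonneg_left (abs_le.1 hbz).1 hNi.le,
          mul_le_mul_of_nonneg_left (abs_le.1 hbz).2 hNi.le⟩
  · -- cardinality
    have hxinj : Function.Injective x := by
      intro i j h
      have h2 := hbi i j
      rw [← h, hbi i i, if_pos rfl] at h2
      by_contra hne
      rw [if_neg hne] at h2
      norm_num at h2
    have hSeq : S = Set.range x ∪ Set.range (fun i => -x i) := by
      ext y
      simp only [hSdef, Set.mem_setOf_eq, Set.mem_union, Set.mem_range]
      constructor
      · rintro ⟨i, h | h⟩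
        · exact Or.inl ⟨i, h.symm⟩
        · exact Or.inr ⟨i, h.symm⟩
      · rintro (⟨i, h⟩ | ⟨i, h⟩)
        · exact ⟨i, Or.inl h.symm⟩
        · exact ⟨i, Or.inr h.symm⟩
    have hdisj : Disjoint (Set.range x) (Set.range (fun i => -x i)) := by
      rw [Set.disjoint_left]
      rintro y ⟨i, rfl⟩ ⟨j, hj⟩
      have h2 := congrArg (xs i) hj
      rw [map_neg, hbi, hbi, if_pos rfl] at h2
      split_ifs at h2 <;> norm_num at h2
    have hninj : Function.Injective (fun i => -x i) := by
      intro i j h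
      exact hxinj (neg_injective h)
    rw [hSeq, Set.ncard_union_eq hdisj (Set.finite_range _) (Set.finite_range _)]
    rw [← Nat.card_coe_set_eq, ← Nat.card_coe_set_eq,
      Nat.card_range_of_injective hxinj, Nat.card_range_of_injective hninj]
    simp [Nat.card_eq_fintype_card]
    ring
end
end

section
/- Let X be an infinite-dimensional Banach space containing a normalized weakly null sequence (x_n) that is d-separated for some d > 0. Then K_a(X) ≥ d. -/
open Set Filter

noncomputable section

/-!
Pass to a subsequence on which all distances `‖xₘ - xₙ‖` lie within `κ` of one another
(a Ramsey-type stabilization along an ultrafilter), and then, using weak nullness, to a further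
subsequence `z` satisfying the lower estimate `‖∑ μₖ zₖ‖ ≥ (d / 4) maxₖ |μₖ|` (Mazur's
construction). For `i ≠ j`, Hahn–Banach gives a norm-one functional `f` with
`f (zⱼ - zᵢ) ≥ r` and `f ≥ 0` on every `zₖ - zᵢ` and `zⱼ - zₖ`, as soon as `zⱼ - zᵢ` keeps
distance `r` from the negative of the cone these vectors generate; such an `f` witnesses the
antipodal condition for the pair `zᵢ, zⱼ`. A cone element of small total weight is handled by a
norming functional of `zⱼ - zᵢ`, which is almost nonnegative on the generators because all
distances are almost equal; one of large weight is a large multiple of some `zⱼ - ∑ νₖ zₖ` with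
`|νₖ| ≤ 1`, handled by the lower estimate. This gives `r = d - 6κ`.
-/

section Subsequences

theorem exists_seq_forall_prefix {α : Type*} (P : ∀ n, (Fin n → α) → α → Prop)
    (h : ∀ n (p : Fin n → α), ∃ a, P n p a) : ∃ f : ℕ → α, ∀ n, P n (fun k => f k) (f n) := by
  choose F hF using h
  let f : ℕ → α := Nat.strongRec fun n f => F n fun k => f k k.2
  refine ⟨f, fun n => ?_⟩
  have hfn : f n = F n fun k => f k := Nat.strongRec_eq _ n
  exact hfn ▸ hF _ _

theorem exists_strictMono_dist_lt {Y : Type*} [PseudoMetricSpace Y] {s : Set Y}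
    (hs : IsCompact s) (c : ℕ → ℕ → Y) (hc : ∀ m n, c m n ∈ s) {κ : ℝ} (hκ : 0 < κ) :
    ∃ φ : ℕ → ℕ, StrictMono φ ∧ ∃ L, ∀ m n, m < n → dist (c (φ m) (φ n)) L < κ := by
  let U := Ultrafilter.of (cofinite : Filter ℕ)
  have hlim : ∀ u : ℕ → Y, (∀ n, u n ∈ s) → ∃ l ∈ s, ∀ᶠ n in U, dist (u n) l < κ / 2 := by
    intro u hu
    obtain ⟨l, hl, hul⟩ := hs.ultrafilter_le_nhds (U.map u)
      (le_principal_iff.2 (mem_map.2 (univ_mem' hu)))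
    exact ⟨l, hl, Metric.tendsto_nhds.1 hul _ (half_pos hκ)⟩
  choose l hls hl using fun m => hlim (c m) (hc m)
  obtain ⟨L, -, hL⟩ := hlim l hls
  have hgt : ∀ m, ∀ᶠ n in U, m < n := fun m =>
    Ultrafilter.of_le _ (Nat.cofinite_eq_atTop ▸ eventually_gt_atTop m)
  obtain ⟨φ, hφL, hφ⟩ := exists_seq_of_forall_finset_exists (fun m => dist (l m) L < κ / 2)
    (fun m n => m < n ∧ dist (c m n) (l m) < κ / 2) fun t _ =>
      (hL.and ((eventually_all_finset t).2 fun m _ => (hgt m).and (hl m))).exists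
  refine ⟨φ, fun m n h => (hφ m n h).1, L, fun m n h => ?_⟩
  calc dist (c (φ m) (φ n)) L ≤ dist (c (φ m) (φ n)) (l (φ m)) + dist (l (φ m)) L :=
        dist_triangle _ _ _
    _ < κ / 2 + κ / 2 := add_lt_add (hφ m n h).2 (hφL _)
    _ = κ := add_halves κ

theorem exists_strictMono_norm_sub_le_add {E : Type*} [SeminormedAddCommGroup E] (x : ℕ → E)
    (hx : ∀ n, ‖x n‖ ≤ 1) {κ : ℝ} (hκ : 0 < κ) : ∃ ψ : ℕ → ℕ, StrictMono ψ ∧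
      ∀ i j k l, i ≠ j → k ≠ l → ‖x (ψ k) - x (ψ l)‖ ≤ ‖x (ψ i) - x (ψ j)‖ + κ := by
  obtain ⟨ψ, hψ, L, hL⟩ := exists_strictMono_dist_lt (isCompact_Icc (a := 0) (b := 2))
    (fun m n => ‖x m - x n‖)
    (fun m n => ⟨norm_nonneg _, (norm_sub_le _ _).trans (by linarith [hx m, hx n])⟩)
    (half_pos hκ)
  have hL' : ∀ m n, m ≠ n → |‖x (ψ m) - x (ψ n)‖ - L| < κ / 2 := by
    intro m n hmn
    rcases hmn.lt_or_gt with h | h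
    · exact hL m n h
    · rw [norm_sub_rev]
      exact hL n m h
  refine ⟨ψ, hψ, fun i j k l hij hkl => ?_⟩
  linarith [(abs_lt.1 (hL' i j hij)).1, (abs_lt.1 (hL' k l hkl)).2]

theorem eventually_forall_le_dist_of_isCompact {Y : Type*} [PseudoMetricSpace Y] {y : ℕ → Y}
    {D : ℝ} (hsep : ∀ m n, m ≠ n → D ≤ dist (y m) (y n)) {K : Set Y} (hK : IsCompact K) {δ : ℝ}
    (hδ : δ < D / 2) : ∀ᶠ n in atTop, ∀ b ∈ K, δ ≤ dist (y n) b := by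
  obtain ⟨t, -, ht, hKt⟩ := finite_cover_balls_of_compact hK (e := D / 2 - δ) (by linarith)
  have hfar : ∀ x₀ : Y, ∀ᶠ n in atTop, D / 2 ≤ dist (y n) x₀ := by
    intro x₀
    have hnear : {n | dist (y n) x₀ < D / 2}.Subsingleton := by
      intro m hm n hn
      by_contra hmn
      have hm : dist (y m) x₀ < D / 2 := hm
      have hn : dist (y n) x₀ < D / 2 := hn
      linarith [hsep m n hmn, dist_triangle_right (y m) (y n) x₀]
    rw [← Nat.cofinite_eq_atTop]
    exact hnear.finite.eventually_cofinite_notMem.mono fun n hn => not_lt.1 hn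
  filter_upwards [(eventually_all_finite ht).2 fun x₀ _ => hfar x₀] with n hn b hb
  obtain ⟨x₀, hx₀, hbx₀⟩ := mem_iUnion₂.1 (hKt hb)
  linarith [hn x₀ hx₀, dist_triangle (y n) b x₀, Metric.mem_ball.1 hbx₀]

end Subsequences

section Duality

variable {X : Type*} [NormedAddCommGroup X] [NormedSpace ℝ X]

theorem ContinuousLinearMap.apply_le_norm_of_norm_le_one {f : X →L[ℝ] ℝ} (hf : ‖f‖ ≤ 1) (w : X) :
    f w ≤ ‖w‖ :=
  (le_abs_self _).trans ((f.le_of_opNorm_le hf w).trans_eq (one_mul _))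

theorem exists_dual_forall_le_of_forall_le_norm {K : Set X} (hK : Convex ℝ K) {r : ℝ}
    (hr : 0 < r) (h : ∀ w ∈ K, r ≤ ‖w‖) :
    ∃ f : X →L[ℝ] ℝ, ‖f‖ ≤ 1 ∧ ∀ w ∈ K, r ≤ f w := by
  have hdisj : Disjoint (Metric.ball (0 : X) r) K := Set.disjoint_left.2 fun w hw hwK =>
    (mem_ball_zero_iff.1 hw).not_ge (h w hwK)
  obtain ⟨f, u, hball, hK⟩ :=
    geometric_hahn_banach_open (convex_ball 0 r) Metric.isOpen_ball hK hdisj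
  have hu : 0 < u := by simpa using hball 0 (Metric.mem_ball_self hr)
  have hf : ‖f‖ ≤ u / r := by
    by_contra! hlt
    obtain ⟨w, hw, huw⟩ := f.exists_lt_apply_of_lt_opNorm hlt
    have hrw : ‖r • w‖ < r := by
      rw [norm_smul, Real.norm_of_nonneg hr.le]
      exact mul_lt_of_lt_one_right hr hw
    have h₁ := hball (r • w) (mem_ball_zero_iff.2 hrw)
    have h₂ := hball (-(r • w)) (mem_ball_zero_iff.2 (by rwa [norm_neg]))
    rw [map_neg, map_smul, smul_eq_mul] at *
    rw [Real.norm_eq_abs, lt_abs] at huw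
    rcases huw with huw | huw <;> rw [div_lt_iff₀ hr] at huw <;> nlinarith
  refine ⟨(r / u) • f, ?_, fun w hw => ?_⟩
  · calc ‖(r / u) • f‖ = r / u * ‖f‖ := by rw [norm_smul, Real.norm_of_nonneg (by positivity)]
      _ ≤ r / u * (u / r) := by gcongr
      _ = 1 := by field_simp
  · calc r = r / u * u := by field_simp
      _ ≤ r / u * f w := by gcongr; exact hK w hw
      _ = ((r / u) • f) w := rfl

theorem exists_dual_nonneg_of_forall_le_norm_add {C : Set X} (hC : Convex ℝ C)
    (hC₀ : (0 : X) ∈ C) (hCsmul : ∀ c ∈ C, ∀ t : ℝ, 0 ≤ t → t • c ∈ C) {v : X} {r : ℝ}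
    (hr : 0 < r) (h : ∀ c ∈ C, r ≤ ‖v + c‖) :
    ∃ f : X →L[ℝ] ℝ, ‖f‖ ≤ 1 ∧ r ≤ f v ∧ ∀ c ∈ C, 0 ≤ f c := by
  obtain ⟨f, hf, hfK⟩ := exists_dual_forall_le_of_forall_le_norm (hC.translate v) hr
    fun _ ⟨c, hc, hw⟩ => hw ▸ h c hc
  have hfC : ∀ c ∈ C, r ≤ f v + f c := fun c hc => by
    simpa using hfK (v + c) ⟨c, hc, rfl⟩
  have hfv : r ≤ f v := by simpa using hfC 0 hC₀
  refine ⟨f, hf, hfv, fun c hc => ?_⟩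
  by_contra! hneg
  -- `f` is bounded below on the ray `v + ℝ≥0 c`, along which it decreases linearly
  have := hfC _ (hCsmul c hc ((f v - r + 1) / -f c) (div_nonneg (by linarith) (by linarith)))
  rw [map_smul, smul_eq_mul, div_mul_eq_mul_div, div_neg, mul_div_cancel_right₀ _ hneg.ne] at this
  linarith

end Duality

section LowerSupEstimate

variable {X : Type*} [NormedAddCommGroup X] [NormedSpace ℝ X]

/-- `Fin n → ℝ` carries the sup norm, so the coefficients range over the cube `|νₖ| ≤ 1`. -/
def boundedCombinations {n : ℕ} (w : Fin n → X) : Set X :=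
  (fun ν : Fin n → ℝ => ∑ k, ν k • w k) '' Metric.closedBall 0 1

theorem isCompact_boundedCombinations {n : ℕ} (w : Fin n → X) :
    IsCompact (boundedCombinations w) :=
  (isCompact_closedBall 0 1).image (by fun_prop)

theorem sum_mem_boundedCombinations (z : ℕ → X) {j : ℕ} {T : Finset ℕ} {ν : ℕ → ℝ}
    (hT : ∀ k ∈ T, k < j) (hν : ∀ k ∈ T, |ν k| ≤ 1) :
    ∑ k ∈ T, ν k • z k ∈ boundedCombinations (fun k : Fin j => z k) := by
  classical
  refine ⟨fun k => if (k : ℕ) ∈ T then ν k else 0, ?_, ?_⟩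
  · rw [mem_closedBall_zero_iff, pi_norm_le_iff_of_nonneg zero_le_one]
    intro k
    split_ifs with hk
    · exact (Real.norm_eq_abs _).trans_le (hν k hk)
    · simp
  · have hT' : (Finset.range j).filter (· ∈ T) = T := by
      ext k
      simpa using fun hk => hT k hk
    simp only [ite_smul, zero_smul]
    rw [Fin.sum_univ_eq_sum_range (fun k => if k ∈ T then ν k • z k else 0) j,
      ← Finset.sum_filter, hT']

/-- In normalized form, the lower `ℓ∞`-estimate `c · maxₖ |μₖ| ≤ ‖∑ₖ μₖ zₖ‖`. -/
def HasLowerSupEstimate (z : ℕ → X) (c : ℝ) : Prop :=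
  ∀ (j : ℕ) (T : Finset ℕ) (ν : ℕ → ℝ), j ∉ T → (∀ k ∈ T, |ν k| ≤ 1) →
    c ≤ ‖z j - ∑ k ∈ T, ν k • z k‖

theorem hasLowerSupEstimate_of_norming (z : ℕ → X) (Φ : ℕ → Finset (X →L[ℝ] ℝ)) {c ε : ℝ}
    (hε : 0 ≤ ε)
    (hnorming : ∀ j, ∀ b ∈ boundedCombinations (fun k : Fin j => z k),
      ∃ φ ∈ Φ j, ‖φ‖ ≤ 1 ∧ c + ε ≤ φ (z j - b))
    (hsmall : ∀ j m, j < m → ∀ φ ∈ Φ j, |φ (z m)| ≤ ε / 2 * (1 / 2) ^ m) :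
    HasLowerSupEstimate z c := by
  classical
  intro j T ν hjT hν
  set head := ∑ k ∈ T.filter (· < j), ν k • z k
  set tail := ∑ k ∈ T.filter (¬ · < j), ν k • z k
  obtain ⟨φ, hφ, hφ₁, hφhead⟩ := hnorming j head (sum_mem_boundedCombinations z
    (fun k hk => (Finset.mem_filter.1 hk).2) fun k hk => hν k (Finset.mem_filter.1 hk).1)
  have hterm : ∀ k ∈ T.filter (¬ · < j), |φ (ν k • z k)| ≤ ε / 2 * (1 / 2) ^ k := by
    intro k hk
    obtain ⟨hkT, hkj⟩ := Finset.mem_filter.1 hk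
    have hjk : j < k := lt_of_le_of_ne (not_lt.1 hkj) fun h => hjT (h ▸ hkT)
    rw [map_smul, smul_eq_mul, abs_mul]
    calc |ν k| * |φ (z k)| ≤ 1 * |φ (z k)| := by gcongr; exact hν k hkT
      _ ≤ ε / 2 * (1 / 2) ^ k := (one_mul _).trans_le (hsmall j k hjk φ hφ)
  have htail : |φ tail| ≤ ε := by
    calc |φ tail| ≤ ∑ k ∈ T.filter (¬ · < j), |φ (ν k • z k)| := by
          rw [map_sum]; exact Finset.abs_sum_le_sum_abs _ _
      _ ≤ ∑ k ∈ T.filter (¬ · < j), ε / 2 * (1 / 2) ^ k := Finset.sum_le_sum hterm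
      _ = ε / 2 * ∑ k ∈ T.filter (¬ · < j), (1 / 2 : ℝ) ^ k := (Finset.mul_sum ..).symm
      _ ≤ ε / 2 * 2 := by
          gcongr
          exact (summable_geometric_two.sum_le_tsum _ fun _ _ => by positivity).trans_eq
            tsum_geometric_two
      _ = ε := by ring
  have hsplit : z j - ∑ k ∈ T, ν k • z k = (z j - head) - tail := by
    rw [← Finset.sum_filter_add_sum_filter_not T (· < j)]
    abel
  calc c ≤ φ (z j - head) - φ tail := by linarith [le_abs_self (φ tail)]
    _ = φ (z j - ∑ k ∈ T, ν k • z k) := by rw [hsplit, map_sub φ (z j - head)]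
    _ ≤ ‖z j - ∑ k ∈ T, ν k • z k‖ := φ.apply_le_norm_of_norm_le_one hφ₁ _

theorem IsCompact.exists_finset_norming {K : Set X} (hK : IsCompact K) {ε : ℝ} (hε : 0 < ε) :
    ∃ Φ : Finset (X →L[ℝ] ℝ), ∀ w ∈ K, ∃ φ ∈ Φ, ‖φ‖ ≤ 1 ∧ ‖w‖ - ε ≤ φ w := by
  classical
  obtain ⟨t, -, ht, hKt⟩ := finite_cover_balls_of_compact hK (half_pos hε)
  choose g hg₁ hg using fun x : X => exists_dual_vector'' ℝ x
  refine ⟨ht.toFinset.image g, fun w hw => ?_⟩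
  obtain ⟨x₀, hx₀, hwx₀⟩ := mem_iUnion₂.1 (hKt hw)
  rw [Metric.mem_ball, dist_eq_norm] at hwx₀
  refine ⟨g x₀, Finset.mem_image_of_mem _ (ht.mem_toFinset.2 hx₀), hg₁ x₀, ?_⟩
  have h₁ : g x₀ w = ‖x₀‖ - g x₀ (x₀ - w) := by simp [hg]
  have h₂ := (g x₀).apply_le_norm_of_norm_le_one (hg₁ x₀) (x₀ - w)
  have h₃ := norm_le_norm_add_norm_sub x₀ w
  rw [norm_sub_rev] at hwx₀
  linarith

theorem exists_strictMono_hasLowerSupEstimate {y : ℕ → X} {D : ℝ} (hD : 0 < D)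
    (hweak : ∀ f : X →L[ℝ] ℝ, Tendsto (fun n => f (y n)) atTop (nhds 0))
    (hsep : ∀ m n, m ≠ n → D ≤ ‖y m - y n‖) :
    ∃ σ : ℕ → ℕ, StrictMono σ ∧ HasLowerSupEstimate (y ∘ σ) (D / 4) := by
  have hsep' : ∀ m n, m ≠ n → D ≤ dist (y m) (y n) := by simpa only [dist_eq_norm] using hsep
  -- Each term records its index in `y` and a finite set of functionals norming its distance to
  -- the earlier terms; later terms are taken almost annihilated by all of these functionals.
  have step : ∀ n (p : Fin n → ℕ × Finset (X →L[ℝ] ℝ)), ∃ q : ℕ × Finset (X →L[ℝ] ℝ),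
      (∀ k, (p k).1 < q.1) ∧ (∀ k, ∀ φ ∈ (p k).2, |φ (y q.1)| ≤ D / 16 / 2 * (1 / 2) ^ n) ∧
      ∀ b ∈ boundedCombinations (fun k => y (p k).1),
        ∃ φ ∈ q.2, ‖φ‖ ≤ 1 ∧ D / 4 + D / 16 ≤ φ (y q.1 - b) := by
    intro n p
    have hK := isCompact_boundedCombinations (fun k => y (p k).1)
    have hafter : ∀ᶠ m in atTop, ∀ k, (p k).1 < m :=
      eventually_all.2 fun k => eventually_gt_atTop _
    have hsmall : ∀ᶠ m in atTop, ∀ k, ∀ φ ∈ (p k).2, |φ (y m)| ≤ D / 16 / 2 * (1 / 2) ^ n :=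
      eventually_all.2 fun k => (eventually_all_finset _).2 fun φ _ =>
        (hweak φ).abs.eventually (ge_mem_nhds (by rw [abs_zero]; positivity))
    obtain ⟨m, hm₁, hm₂, hm₃⟩ := (hafter.and (hsmall.and
      (eventually_forall_le_dist_of_isCompact hsep' hK (δ := 3 * D / 8) (by linarith)))).exists
    obtain ⟨Φ, hΦ⟩ := (hK.image (continuous_const.sub continuous_id) :
      IsCompact ((y m - ·) '' _)).exists_finset_norming (ε := D / 16) (by positivity)
    refine ⟨(m, Φ), hm₁, hm₂, fun b hb => ?_⟩
    obtain ⟨φ, hφ, hφ₁, hφb⟩ := hΦ _ ⟨b, hb, rfl⟩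
    exact ⟨φ, hφ, hφ₁, by linarith [(hm₃ b hb).trans_eq (dist_eq_norm _ _)]⟩
  obtain ⟨f, hf⟩ := exists_seq_forall_prefix _ step
  refine ⟨fun k => (f k).1, strictMono_nat_of_lt_succ fun m => (hf (m + 1)).1 (Fin.last m), ?_⟩
  exact hasLowerSupEstimate_of_norming _ (fun k => (f k).2) (by positivity)
    (fun j => (hf j).2.2) fun j m hjm => (hf m).2.1 ⟨j, hjm⟩

end LowerSupEstimate

section PairCombination

variable {X : Type*} [NormedAddCommGroup X] [NormedSpace ℝ X] {z : ℕ → X} {i j : ℕ}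
  {T : Finset ℕ} {a b : ℕ → ℝ}

def pairCombination (z : ℕ → X) (i j : ℕ) (T : Finset ℕ) (a b : ℕ → ℝ) : X :=
  z j - z i + ∑ k ∈ T, (a k • (z k - z i) + b k • (z j - z k))

theorem pairCombination_swap : pairCombination z j i T b a = -pairCombination z i j T a b := by
  simp only [pairCombination, neg_add, ← Finset.sum_neg_distrib]
  congr 1
  · abel
  · refine Finset.sum_congr rfl fun k _ => ?_
    simp only [smul_sub]
    abel

theorem mul_le_norm_pairCombination {c : ℝ} (hz : HasLowerSupEstimate z c) (hij : i ≠ j)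
    (hiT : i ∉ T) (hjT : j ∉ T) (ha : ∀ k ∈ T, 0 ≤ a k) (hb : ∀ k ∈ T, 0 ≤ b k)
    (hab : ∑ k ∈ T, a k ≤ ∑ k ∈ T, b k) :
    (1 + ∑ k ∈ T, b k) * c ≤ ‖pairCombination z i j T a b‖ := by
  classical
  set A := ∑ k ∈ T, a k
  set B := ∑ k ∈ T, b k
  have hA : 0 ≤ A := Finset.sum_nonneg ha
  have hB : 0 < 1 + B := by linarith
  set ν : ℕ → ℝ := fun k => if k = i then (1 + A) / (1 + B) else (b k - a k) / (1 + B)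
  have hν : ∀ k ∈ insert i T, |ν k| ≤ 1 := by
    intro k hk
    simp only [ν]
    split_ifs with hki
    · rw [abs_of_nonneg (by positivity), div_le_one hB]
      linarith
    · have hkT : k ∈ T := (Finset.mem_insert.1 hk).resolve_left hki
      rw [abs_div, abs_of_pos hB, div_le_one hB, abs_le]
      constructor <;> linarith [Finset.single_le_sum ha hkT, Finset.single_le_sum hb hkT,
        ha k hkT, hb k hkT]
  have hsum : ∑ k ∈ T, ν k • z k = (1 + B)⁻¹ • ∑ k ∈ T, (b k - a k) • z k := by
    rw [Finset.smul_sum]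
    refine Finset.sum_congr rfl fun k hk => ?_
    simp only [ν, if_neg (ne_of_mem_of_not_mem hk hiT), smul_smul, div_eq_inv_mul]
  have heq : pairCombination z i j T a b = (1 + B) • (z j - ∑ k ∈ insert i T, ν k • z k) := by
    rw [Finset.sum_insert hiT, hsum]
    simp only [ν, if_pos rfl, smul_sub, smul_add, smul_smul, mul_div_cancel₀ _ hB.ne',
      mul_inv_cancel₀ hB.ne', one_smul, pairCombination, sub_smul, Finset.sum_add_distrib,
      Finset.sum_sub_distrib, ← Finset.sum_smul]
    module
  rw [heq, norm_smul, Real.norm_of_nonneg hB.le]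
  gcongr
  exact hz j _ ν (by simp [hjT, hij.symm]) hν

theorem norm_sub_mul_sum_le_norm_pairCombination {κ : ℝ}
    (hnear : ∀ k ∈ T, ‖z j - z k‖ ≤ ‖z j - z i‖ + κ ∧ ‖z k - z i‖ ≤ ‖z j - z i‖ + κ)
    (ha : ∀ k ∈ T, 0 ≤ a k) (hb : ∀ k ∈ T, 0 ≤ b k) :
    ‖z j - z i‖ - κ * ∑ k ∈ T, (a k + b k) ≤ ‖pairCombination z i j T a b‖ := by
  obtain ⟨g, hg₁, hgv⟩ := exists_dual_vector'' ℝ (z j - z i)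
  replace hgv : g (z j - z i) = ‖z j - z i‖ := by simpa using hgv
  have hgen : ∀ k ∈ T, -κ ≤ g (z k - z i) ∧ -κ ≤ g (z j - z k) := by
    intro k hk
    have h₁ : z k - z i = (z j - z i) - (z j - z k) := by abel
    have h₂ : z j - z k = (z j - z i) - (z k - z i) := by abel
    constructor
    · rw [h₁, map_sub, hgv]
      linarith [g.apply_le_norm_of_norm_le_one hg₁ (z j - z k), hnear k hk]
    · rw [h₂, map_sub, hgv]
      linarith [g.apply_le_norm_of_norm_le_one hg₁ (z k - z i), hnear k hk]
  calc ‖z j - z i‖ - κ * ∑ k ∈ T, (a k + b k)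
      = ‖z j - z i‖ + ∑ k ∈ T, (a k * -κ + b k * -κ) := by
        rw [Finset.mul_sum, sub_eq_add_neg, ← Finset.sum_neg_distrib]
        congr 1
        exact Finset.sum_congr rfl fun k _ => by ring
    _ ≤ ‖z j - z i‖ + ∑ k ∈ T, (a k * g (z k - z i) + b k * g (z j - z k)) := by
        gcongr ‖z j - z i‖ + ∑ k ∈ T, ?_ with k hk
        exact add_le_add (mul_le_mul_of_nonneg_left (hgen k hk).1 (ha k hk))
          (mul_le_mul_of_nonneg_left (hgen k hk).2 (hb k hk))
    _ = g (pairCombination z i j T a b) := by simp [pairCombination, hgv]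
    _ ≤ ‖pairCombination z i j T a b‖ := g.apply_le_norm_of_norm_le_one hg₁ _

theorem sub_le_norm_pairCombination {d κ : ℝ} (hd : 0 ≤ d) (hκ : 0 ≤ κ)
    (hz : HasLowerSupEstimate z (d / 4)) (hij : i ≠ j) (hdij : d ≤ ‖z j - z i‖)
    (hnear : ∀ k ∈ T, ‖z j - z k‖ ≤ ‖z j - z i‖ + κ ∧ ‖z k - z i‖ ≤ ‖z j - z i‖ + κ)
    (hiT : i ∉ T) (hjT : j ∉ T) (ha : ∀ k ∈ T, 0 ≤ a k) (hb : ∀ k ∈ T, 0 ≤ b k) :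
    d - 6 * κ ≤ ‖pairCombination z i j T a b‖ := by
  by_cases hsmall : ∑ k ∈ T, (a k + b k) ≤ 6
  · calc d - 6 * κ ≤ ‖z j - z i‖ - κ * ∑ k ∈ T, (a k + b k) := by
          nlinarith [mul_le_mul_of_nonneg_left hsmall hκ]
      _ ≤ _ := norm_sub_mul_sum_le_norm_pairCombination hnear ha hb
  rw [Finset.sum_add_distrib, not_le] at hsmall
  rcases le_total (∑ k ∈ T, a k) (∑ k ∈ T, b k) with hab | hba
  · calc d - 6 * κ ≤ (1 + ∑ k ∈ T, b k) * (d / 4) := by nlinarith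
      _ ≤ _ := mul_le_norm_pairCombination hz hij hiT hjT ha hb hab
  · calc d - 6 * κ ≤ (1 + ∑ k ∈ T, a k) * (d / 4) := by nlinarith
      _ ≤ ‖pairCombination z j i T b a‖ :=
        mul_le_norm_pairCombination hz hij.symm hjT hiT hb ha hba
      _ = _ := by rw [pairCombination_swap, norm_neg]

end PairCombination

section Antipodal

variable {X : Type*} [NormedAddCommGroup X] [NormedSpace ℝ X]

theorem exists_dual_between_of_le_norm_pairCombination (z : ℕ → X) {i j : ℕ} {r : ℝ}
    (hr : 0 < r) (h : ∀ T a b, i ∉ T → j ∉ T → (∀ k ∈ T, 0 ≤ a k) → (∀ k ∈ T, 0 ≤ b k) →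
      r ≤ ‖pairCombination z i j T a b‖) :
    ∃ f : X →L[ℝ] ℝ, ‖f‖ ≤ 1 ∧ r ≤ f (z j) - f (z i) ∧
      ∀ k, f (z i) ≤ f (z k) ∧ f (z k) ≤ f (z j) := by
  classical
  -- the cone generated by the `z k - z i` and `z j - z k`, as the image of coefficient pairs
  let P : Set ((ℕ →₀ ℝ) × (ℕ →₀ ℝ)) :=
    {p | (∀ k, 0 ≤ p.1 k ∧ 0 ≤ p.2 k) ∧ p.1 i = 0 ∧ p.1 j = 0 ∧ p.2 i = 0 ∧ p.2 j = 0}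
  let L := (Finsupp.linearCombination ℝ fun k => z k - z i).coprod
    (Finsupp.linearCombination ℝ fun k => z j - z k)
  have hPconv : Convex ℝ P := by
    rintro p ⟨hp, hp₁, hp₂, hp₃, hp₄⟩ q ⟨hq, hq₁, hq₂, hq₃, hq₄⟩ s t hs ht -
    refine ⟨fun k => ⟨?_, ?_⟩, ?_, ?_, ?_, ?_⟩ <;> simp only [Prod.fst_add, Prod.snd_add,
      Prod.smul_fst, Prod.smul_snd, Finsupp.add_apply, Finsupp.smul_apply, smul_eq_mul, *,
      mul_zero, add_zero]
    · exact add_nonneg (mul_nonneg hs (hp k).1) (mul_nonneg ht (hq k).1)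
    · exact add_nonneg (mul_nonneg hs (hp k).2) (mul_nonneg ht (hq k).2)
  have hPsmul : ∀ p ∈ P, ∀ t : ℝ, 0 ≤ t → t • p ∈ P := by
    rintro p ⟨hp, hp₁, hp₂, hp₃, hp₄⟩ t ht
    refine ⟨fun k => ⟨?_, ?_⟩, ?_, ?_, ?_, ?_⟩ <;>
      simp only [Prod.smul_fst, Prod.smul_snd, Finsupp.smul_apply, smul_eq_mul, *, mul_zero]
    · exact mul_nonneg ht (hp k).1
    · exact mul_nonneg ht (hp k).2
  have hbound : ∀ c ∈ L '' P, r ≤ ‖(z j - z i) + c‖ := by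
    rintro _ ⟨p, ⟨hp, hp₁, hp₂, hp₃, hp₄⟩, rfl⟩
    have hpc : (z j - z i) + L p =
        pairCombination z i j (p.1.support ∪ p.2.support) p.1 p.2 := by
      simp only [L, LinearMap.coprod_apply, Finsupp.linearCombination_apply, pairCombination,
        Finset.sum_add_distrib]
      rw [Finsupp.sum_of_support_subset p.1 Finset.subset_union_left _ (by simp),
        Finsupp.sum_of_support_subset p.2 Finset.subset_union_right _ (by simp)]
    rw [hpc]
    exact h _ _ _ (by simp [hp₁, hp₃]) (by simp [hp₂, hp₄]) (fun k _ => (hp k).1)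
      fun k _ => (hp k).2
  obtain ⟨f, hf, hfv, hfC⟩ := exists_dual_nonneg_of_forall_le_norm_add (hPconv.linear_image L)
    ⟨0, ⟨fun _ => ⟨le_rfl, le_rfl⟩, rfl, rfl, rfl, rfl⟩, map_zero L⟩
    (fun _ ⟨p, hp, hpc⟩ t ht => ⟨t • p, hPsmul p hp t ht, hpc ▸ map_smul L t p⟩) hr hbound
  have hsingle : ∀ k, k ≠ i → k ≠ j → ∀ m, 0 ≤ Finsupp.single k (1 : ℝ) m ∧ 0 ≤ (0 : ℕ →₀ ℝ) m :=
    fun k _ _ m => ⟨by simp [Finsupp.single_apply]; split_ifs <;> norm_num, le_rfl⟩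
  rw [map_sub] at hfv
  refine ⟨f, hf, hfv, fun k => ?_⟩
  by_cases hki : k = i
  · subst hki
    exact ⟨le_rfl, by linarith⟩
  by_cases hkj : k = j
  · subst hkj
    exact ⟨by linarith, le_rfl⟩
  have h₁ := hfC (z k - z i) ⟨(Finsupp.single k 1, 0), ⟨hsingle k hki hkj, by simp [Ne.symm hki,
    Ne.symm hkj]⟩, by simp [L]⟩
  have h₂ := hfC (z j - z k) ⟨(0, Finsupp.single k 1), ⟨fun m => (hsingle k hki hkj m).symm, by
    simp [Ne.symm hki, Ne.symm hkj]⟩, by simp [L]⟩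
  rw [map_sub] at h₁ h₂
  constructor <;> linarith

theorem isBSA_range (z : ℕ → X) {d κ : ℝ} (hnorm : ∀ k, ‖z k‖ ≤ 1)
    (hsep : ∀ i j, i ≠ j → d ≤ ‖z i - z j‖)
    (hnear : ∀ i j k l, i ≠ j → k ≠ l → ‖z k - z l‖ ≤ ‖z i - z j‖ + κ)
    (hz : HasLowerSupEstimate z (d / 4)) (hr : 0 < d - 6 * κ) :
    IsBSA X (range z) 1 1 (d - 6 * κ) := by
  have hκ : 0 ≤ κ := by linarith [hnear 0 1 0 1 zero_ne_one zero_ne_one]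
  refine ⟨forall_mem_range.2 hnorm, ?_⟩
  rintro _ ⟨i, rfl⟩ _ ⟨j, rfl⟩ hne
  have hij : i ≠ j := fun h => hne (congrArg z h)
  obtain ⟨f, hf, hfij, hfk⟩ := exists_dual_between_of_le_norm_pairCombination z hr
    fun T a b hiT hjT ha hb => sub_le_norm_pairCombination (by linarith) hκ hz hij
      (hsep j i hij.symm) (fun k hk => ⟨hnear j i j k hij.symm fun h => hjT (h ▸ hk),
        hnear j i k i hij.symm fun h => hiT (h ▸ hk)⟩) hiT hjT ha hb
  exact ⟨f, hf, hfij, forall_mem_range.2 hfk⟩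

theorem bddAbove_setOf_isBSA : BddAbove {d : ℝ | ∃ S : Set X, S.Infinite ∧ IsBSA X S 1 1 d} := by
  refine ⟨2, ?_⟩
  rintro d ⟨S, hS, hnorm, hsep⟩
  obtain ⟨x, hx, y, hy, hxy⟩ := hS.nontrivial
  obtain ⟨f, hf, hd, -⟩ := hsep x hx y hy hxy
  calc d ≤ f (y - x) := by rwa [map_sub]
    _ ≤ ‖y - x‖ := f.apply_le_norm_of_norm_le_one hf _
    _ ≤ ‖y‖ + ‖x‖ := norm_sub_le _ _
    _ ≤ 2 := by linarith [hnorm x hx, hnorm y hy]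

end Antipodal

theorem stmt10_general {X : Type*} [NormedAddCommGroup X] [NormedSpace ℝ X]
    (x : ℕ → X) (d : ℝ) (hd : 0 < d)
    (hnorm : ∀ n, ‖x n‖ = 1)
    (hweak : ∀ f : X →L[ℝ] ℝ, Tendsto (fun n => f (x n)) atTop (nhds 0))
    (hsep : ∀ n m : ℕ, n ≠ m → d ≤ ‖x n - x m‖) :
    d ≤ Ka X := by
  refine le_of_forall_lt_imp_le_of_dense fun d' hd' => ?_
  set κ := (d - max d' (d / 2)) / 12
  have hκ : 0 < κ := by have := max_lt hd' (half_lt_self hd); simp only [κ]; linarith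
  obtain ⟨ψ, hψ, hnear⟩ := exists_strictMono_norm_sub_le_add x (fun n => (hnorm n).le) hκ
  obtain ⟨σ, hσ, hz⟩ := exists_strictMono_hasLowerSupEstimate hd
    (fun f => (hweak f).comp hψ.tendsto_atTop) fun m n h => hsep _ _ (hψ.injective.ne h)
  have hsepz : ∀ i j, i ≠ j → d ≤ ‖x (ψ (σ i)) - x (ψ (σ j))‖ :=
    fun i j h => hsep _ _ ((hψ.comp hσ).injective.ne h)
  have hinf : (range fun k => x (ψ (σ k))).Infinite := infinite_range_of_injective
    fun i j h => by_contra fun hij => by linarith [hsepz i j hij, norm_sub_eq_zero_iff.2 h]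
  have hBSA := isBSA_range (fun k => x (ψ (σ k))) (fun k => (hnorm _).le) hsepz
    (fun i j k l hij hkl => hnear _ _ _ _ (hσ.injective.ne hij) (hσ.injective.ne hkl)) hz
    (d := d) (κ := κ) (by simp only [κ]; linarith [le_max_right d' (d / 2)])
  calc d' ≤ d - 6 * κ := by simp only [κ]; linarith [le_max_left d' (d / 2)]
    _ ≤ Ka X := le_csSup bddAbove_setOf_isBSA ⟨_, hinf, hBSA⟩

/-- If an infinite-dimensional Banach space contains a normalized weakly null
d-separated sequence (d > 0), then K_a(X) ≥ d. -/
theorem stmt10 {X : Type*} [NormedAddCommGroup X] [NormedSpace ℝ X]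
    [CompleteSpace X] (hinf : ¬FiniteDimensional ℝ X)
    (x : ℕ → X) (d : ℝ) (hd : 0 < d)
    (hnorm : ∀ n, ‖x n‖ = 1)
    (hweak : ∀ f : X →L[ℝ] ℝ, Tendsto (fun n => f (x n)) atTop (nhds 0))
    (hsep : ∀ n m : ℕ, n ≠ m → d ≤ ‖x n - x m‖) :
    d ≤ Ka X :=
  stmt10_general x d hd hnorm hweak hsep
end
end

section
/- For every infinite-dimensional Banach space X there exists an equivalent norm ‖·‖' on X such that K_a(X, ‖·‖') = 2. In fact, if {(x_i, x*_i)} is an Auerbach system in X and V = conv(B_X ∪ {±2x_i : i ∈ ℕ}), then the Minkowski functional of V is an equivalent norm in which {±2x_i : i ∈ ℕ} is a normalized 2-equilateral set. -/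
/-!
Mazur's construction gives a biorthogonal sequence `(x n, f n)` with `‖x n‖ ≤ 3` and
`‖f n‖ ≤ 1`, which serves as well as an Auerbach system. Let `N` be the gauge of
`V = conv (B_X ∪ {± 2 • x n})`; as `B_X ⊆ V ⊆ 6 • B_X`, it is an equivalent norm. For `i ≠ j` the
functional `(f j - f i) / 2` has norm at most `1` and takes values in `[-1, 1]` at the points
`± 2 • x n`, so it is at most `1` on `V`, hence at most `N`; it separates `2 • x i` from
`2 • x j` by `2`. So `{2 • x n}` is an infinite `(1, 1, 2)`-b.s.a. set for `N`, which forces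
`N (2 • x n) = 1` and `N (2 • x i - 2 • x j) = 2`, while `K_a ≤ 2` holds for every norm.
-/

open Set Filter

noncomputable section

/-- `S` is a `(1,1,d)`-b.s.a. set with respect to the norm function `N` on `X`:
the dual-ball condition `‖f‖ ≤ 1` is expressed as `f z ≤ N z` for all `z`. -/
def IsBSAWith {X : Type*} [AddCommGroup X] [Module ℝ X] (N : X → ℝ)
    (S : Set X) (d : ℝ) : Prop :=
  (∀ x ∈ S, N x ≤ 1) ∧
  ∀ x ∈ S, ∀ y ∈ S, x ≠ y → ∃ f : X →ₗ[ℝ] ℝ, (∀ z, f z ≤ N z) ∧ d ≤ f y - f x ∧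
    ∀ z ∈ S, f x ≤ f z ∧ f z ≤ f y

/-- The antipodal Kottman constant with respect to the norm function . -/
def KaWith {X : Type*} [AddCommGroup X] [Module ℝ X] (N : X → ℝ) : ℝ :=
  sSup {d : ℝ | ∃ S : Set X, S.Infinite ∧ IsBSAWith N S d}

section Kottman

variable {X : Type*} [AddCommGroup X] [Module ℝ X] {p : Seminorm ℝ X} {S : Set X} {d : ℝ}

theorem abs_apply_le_of_forall_le {f : X →ₗ[ℝ] ℝ} (hf : ∀ z, f z ≤ p z) (z : X) :
    |f z| ≤ p z := by
  refine abs_le.2 ⟨?_, hf z⟩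
  have := hf (-z)
  rw [map_neg, map_neg_eq_map] at this
  linarith

theorem IsBSAWith.le_two (hS : IsBSAWith p S d) (hnt : S.Nontrivial) : d ≤ 2 := by
  obtain ⟨x, hx, y, hy, hxy⟩ := hnt
  obtain ⟨f, hfp, hd, -⟩ := hS.2 x hx y hy hxy
  have hfx := abs_le.1 ((abs_apply_le_of_forall_le hfp x).trans (hS.1 x hx))
  have hfy := abs_le.1 ((abs_apply_le_of_forall_le hfp y).trans (hS.1 y hy))
  linarith [hfx.1, hfy.2]

theorem isBSAWith_two (h1 : ∀ x ∈ S, p x ≤ 1)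
    (h2 : ∀ x ∈ S, ∀ y ∈ S, x ≠ y → ∃ f : X →ₗ[ℝ] ℝ, (∀ z, f z ≤ p z) ∧ 2 ≤ f y - f x) :
    IsBSAWith p S 2 := by
  refine ⟨h1, fun x hx y hy hxy => ?_⟩
  obtain ⟨f, hfp, hd⟩ := h2 x hx y hy hxy
  have hbound : ∀ z ∈ S, |f z| ≤ 1 := fun z hz =>
    (abs_apply_le_of_forall_le hfp z).trans (h1 z hz)
  have hfx := abs_le.1 (hbound x hx)
  have hfy := abs_le.1 (hbound y hy)
  refine ⟨f, hfp, hd, fun z hz => ?_⟩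
  have hfz := abs_le.1 (hbound z hz)
  constructor <;> linarith

theorem IsBSAWith.map_eq_one (hS : IsBSAWith p S 2) (hnt : S.Nontrivial) {x : X}
    (hx : x ∈ S) : p x = 1 := by
  obtain ⟨y, hy, hyx⟩ := hnt.exists_ne x
  obtain ⟨f, hfp, hd, -⟩ := hS.2 x hx y hy hyx.symm
  have hfx := abs_apply_le_of_forall_le hfp x
  have hfy := (le_abs_self _).trans ((abs_apply_le_of_forall_le hfp y).trans (hS.1 y hy))
  refine le_antisymm (hS.1 x hx) ?_
  rw [abs_le] at hfx
  linarith [hfx.1]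

theorem IsBSAWith.map_sub_eq_two (hS : IsBSAWith p S 2) {x y : X} (hx : x ∈ S) (hy : y ∈ S)
    (hxy : x ≠ y) : p (x - y) = 2 := by
  obtain ⟨f, hfp, hd, -⟩ := hS.2 y hy x hx hxy.symm
  refine le_antisymm ?_ ?_
  · calc p (x - y) ≤ p x + p y := map_sub_le_add p x y
      _ ≤ 1 + 1 := add_le_add (hS.1 x hx) (hS.1 y hy)
      _ = 2 := by norm_num
  · calc (2 : ℝ) ≤ f x - f y := hd
      _ = f (x - y) := (map_sub f x y).symm
      _ ≤ p (x - y) := hfp _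

theorem kaWith_eq_two (hS : IsBSAWith p S 2) (hinf : S.Infinite) : KaWith p = 2 := by
  have hub : ∀ d ∈ {d : ℝ | ∃ S : Set X, S.Infinite ∧ IsBSAWith p S d}, d ≤ 2 := by
    rintro d ⟨T, hTinf, hT⟩
    exact hT.le_two hTinf.nontrivial
  exact le_antisymm (csSup_le ⟨2, S, hinf, hS⟩ hub) (le_csSup ⟨2, hub⟩ ⟨S, hinf, hS⟩)

end Kottman

section Gauge

variable {X : Type*} [AddCommGroup X] [Module ℝ X]

theorem le_one_of_mem_absConvexHull {s : Set X} {f : X →ₗ[ℝ] ℝ} (hf : ∀ x ∈ s, |f x| ≤ 1)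
    {x : X} (hx : x ∈ absConvexHull ℝ s) : f x ≤ 1 := by
  rw [← convexHull_union_neg_eq_absConvexHull] at hx
  refine convexHull_min (union_subset (fun y hy => ?_) (fun y hy => ?_))
    (convex_halfSpace_le f.isLinear 1) hx
  · exact (le_abs_self _).trans (hf y hy)
  · have := hf (-y) hy
    rw [map_neg, abs_neg] at this
    exact (le_abs_self _).trans this

theorem le_gauge_of_forall_le_one {s : Set X} (hs : Absorbent ℝ s) {f : X →ₗ[ℝ] ℝ}
    (hf : ∀ x ∈ s, f x ≤ 1) (x : X) : f x ≤ gauge s x := by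
  refine le_csInf hs.gauge_set_nonempty ?_
  rintro r ⟨hr, y, hy, rfl⟩
  rw [map_smul, smul_eq_mul]
  nlinarith [hf y hy]

end Gauge

section UnitBallHull

open Metric

variable {X : Type*} [NormedAddCommGroup X] [NormedSpace ℝ X]

def unitBallHull (A : Set X) : Set X := absConvexHull ℝ (closedBall 0 1 ∪ A)

theorem closedBall_subset_unitBallHull (A : Set X) : closedBall (0 : X) 1 ⊆ unitBallHull A :=
  subset_union_left.trans subset_absConvexHull

theorem absorbent_unitBallHull (A : Set X) : Absorbent ℝ (unitBallHull A) :=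
  absorbent_nhds_zero (mem_of_superset (closedBall_mem_nhds 0 one_pos)
    (closedBall_subset_unitBallHull A))

theorem unitBallHull_subset_closedBall {A : Set X} {R : ℝ} (hR : 1 ≤ R)
    (hA : A ⊆ closedBall 0 R) : unitBallHull A ⊆ closedBall 0 R :=
  absConvexHull_min (union_subset (closedBall_subset_closedBall hR) hA)
    ⟨balanced_closedBall_zero, convex_closedBall 0 R⟩

def unitBallHullSeminorm (A : Set X) : Seminorm ℝ X :=
  gaugeSeminorm balanced_absConvexHull convex_absConvexHull (absorbent_unitBallHull A)

theorem unitBallHullSeminorm_le_norm (A : Set X) (x : X) : unitBallHullSeminorm A x ≤ ‖x‖ := by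
  have := mul_gauge_le_norm (x := x)
    (ball_subset_closedBall.trans (closedBall_subset_unitBallHull A))
  rwa [one_mul] at this

theorem norm_div_le_unitBallHullSeminorm {A : Set X} {R : ℝ} (hR : 1 ≤ R)
    (hA : A ⊆ closedBall 0 R) (x : X) : ‖x‖ / R ≤ unitBallHullSeminorm A x :=
  le_gauge_of_subset_closedBall (absorbent_unitBallHull A) (by linarith)
    (unitBallHull_subset_closedBall hR hA)

theorem unitBallHullSeminorm_le_one {A : Set X} {a : X} (ha : a ∈ A) :
    unitBallHullSeminorm A a ≤ 1 :=
  gauge_le_one_of_mem (subset_absConvexHull (subset_union_right ha))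

theorem le_unitBallHullSeminorm {A : Set X} {f : StrongDual ℝ X} (hf : ‖f‖ ≤ 1)
    (hfA : ∀ a ∈ A, |f a| ≤ 1) (x : X) : f x ≤ unitBallHullSeminorm A x := by
  refine le_gauge_of_forall_le_one (absorbent_unitBallHull A) (f := (f : X →ₗ[ℝ] ℝ))
    (fun y hy => le_one_of_mem_absConvexHull (fun z hz => ?_) hy) x
  rcases hz with hz | hz
  · calc |f z| = ‖f z‖ := rfl
      _ ≤ ‖f‖ * ‖z‖ := f.le_opNorm z
      _ ≤ 1 * 1 := mul_le_mul hf (by simpa using hz) (norm_nonneg z) zero_le_one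
      _ = 1 := one_mul 1
  · exact hfA z hz

end UnitBallHull

section Biorthogonal

open Metric

variable {X : Type*} [NormedAddCommGroup X] [NormedSpace ℝ X]

theorem exists_norm_eq_one_forall_apply_eq_zero_s17 (hinf : ¬FiniteDimensional ℝ X) {ι : Type*}
    [Finite ι] (f : ι → StrongDual ℝ X) : ∃ z : X, ‖z‖ = 1 ∧ ∀ i, f i z = 0 := by
  set L : X →ₗ[ℝ] ι → ℝ := LinearMap.pi fun i => (f i : X →ₗ[ℝ] ℝ)
  have hker : LinearMap.ker L ≠ ⊥ := fun h =>
    hinf (Module.Finite.of_injective L (LinearMap.ker_eq_bot.1 h))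
  obtain ⟨z, hz, hz0⟩ := Submodule.exists_mem_ne_zero_of_ne_bot hker
  refine ⟨‖z‖⁻¹ • z, norm_smul_inv_norm hz0, fun i => ?_⟩
  rw [map_smul, smul_eq_mul, show f i z = 0 from congrFun hz i, mul_zero]

theorem Submodule.exists_finset_norming (E : Submodule ℝ X) [FiniteDimensional ℝ E] {r : ℝ}
    (hr : r < 1) : ∃ Ψ : Finset (StrongDual ℝ X), (∀ ψ ∈ Ψ, ‖ψ‖ ≤ 1) ∧
      ∀ e ∈ E, e ≠ 0 → ∃ ψ ∈ Ψ, r * ‖e‖ < ψ e := by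
  classical
  choose ψ hψ using fun c : X => exists_dual_vector'' ℝ c
  set K : Set X := Subtype.val '' sphere (0 : E) 1
  have hK : IsCompact K := (isCompact_sphere (0 : E) 1).image continuous_subtype_val
  have hcover : K ⊆ ⋃ c ∈ K, {u | r < ψ c u} := by
    rintro _ ⟨c, hc, rfl⟩
    refine mem_biUnion ⟨c, hc, rfl⟩ ?_
    have hc1 : ‖(c : X)‖ = 1 := mem_sphere_zero_iff_norm.1 hc
    simpa [(hψ c).2, hc1] using hr
  obtain ⟨T, -, hT, hKT⟩ := hK.elim_finite_subcover_image
    (fun c _ => isOpen_lt continuous_const (ψ c).continuous) hcover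
  refine ⟨hT.toFinset.image ψ, ?_, fun e he he0 => ?_⟩
  · simp only [Finset.mem_image, Finite.mem_toFinset]
    rintro _ ⟨c, -, rfl⟩
    exact (hψ c).1
  · have he' : ‖e‖⁻¹ • e ∈ K :=
      ⟨⟨‖e‖⁻¹ • e, E.smul_mem _ he⟩, by
        rw [mem_sphere_zero_iff_norm]; exact norm_smul_inv_norm he0, rfl⟩
    obtain ⟨c, hc, hcu⟩ := mem_iUnion₂.1 (hKT he')
    refine ⟨ψ c, Finset.mem_image_of_mem ψ (hT.mem_toFinset.2 hc), ?_⟩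
    have hpos : 0 < ‖e‖ := norm_pos_iff.2 he0
    rw [mem_ofPred_eq, map_smul, smul_eq_mul, lt_inv_mul_iff₀ hpos] at hcu
    linarith

theorem Submodule.exists_dual_le_apply_of_le_norm_sub (E : Submodule ℝ X) {z : X} {d : ℝ}
    (hd : ∀ e ∈ E, d ≤ ‖z - e‖) :
    ∃ g : StrongDual ℝ X, ‖g‖ ≤ 1 ∧ (∀ e ∈ E, g e = 0) ∧ d ≤ g z := by
  obtain ⟨h, hh, hhz⟩ := exists_dual_vector'' ℝ (E.mkQ z)
  have hmkQL : ‖E.mkQL‖ ≤ 1 :=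
    ContinuousLinearMap.opNorm_le_bound _ zero_le_one fun x => by
      simpa using Submodule.Quotient.norm_mk_le E x
  refine ⟨h.comp E.mkQL, ?_, fun e he => ?_, ?_⟩
  · calc ‖h.comp E.mkQL‖ ≤ ‖h‖ * ‖E.mkQL‖ := h.opNorm_comp_le _
      _ ≤ 1 := mul_le_one₀ hh (ContinuousLinearMap.opNorm_nonneg _) hmkQL
  · simp [(Submodule.Quotient.mk_eq_zero E).2 he]
  · rw [ContinuousLinearMap.comp_apply, Submodule.mkQL_apply, hhz]
    refine QuotientAddGroup.le_norm_iff.2 fun m hm => ?_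
    have : z - m ∈ E := (Submodule.Quotient.eq E).1 hm.symm
    simpa using hd _ this

theorem exists_biorthogonal_extension (hinf : ¬FiniteDimensional ℝ X) {ι : Type*} [Finite ι]
    (x : ι → X) (f : ι → StrongDual ℝ X) :
    ∃ y : X, ∃ g : StrongDual ℝ X, ‖y‖ ≤ 3 ∧ ‖g‖ ≤ 1 ∧ g y = 1 ∧
      (∀ i, f i y = 0) ∧ ∀ i, g (x i) = 0 := by
  set E := Submodule.span ℝ (range x)
  have : FiniteDimensional ℝ E := FiniteDimensional.span_of_finite ℝ (finite_range x)
  obtain ⟨Ψ, hΨ1, hΨE⟩ := E.exists_finset_norming (r := 1 / 2) (by norm_num)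
  obtain ⟨z, hz1, hz⟩ := exists_norm_eq_one_forall_apply_eq_zero_s17 hinf (Sum.elim f
    (fun ψ : Ψ => ψ.1))
  -- `z` is killed by the functionals norming `E`, so `‖z - e‖ ≥ max (‖e‖ / 2) (1 - ‖e‖) ≥ 1 / 3`.
  have hfar : ∀ e ∈ E, 1 / 3 ≤ ‖z - e‖ := by
    intro e he
    have hrev : 1 - ‖e‖ ≤ ‖z - e‖ := by simpa [hz1] using norm_sub_norm_le z e
    rcases eq_or_ne e 0 with rfl | he0
    · norm_num [hz1]
    obtain ⟨ψ, hψ, hψe⟩ := hΨE e he he0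
    have hψz : ψ z = 0 := hz (Sum.inr ⟨ψ, hψ⟩)
    have hψ : ψ (e - z) ≤ ‖z - e‖ := by
      rw [norm_sub_rev]
      exact (le_abs_self _).trans ((ψ.le_opNorm _).trans
        (mul_le_of_le_one_left (norm_nonneg _) (hΨ1 ψ hψ)))
    rw [map_sub, hψz, sub_zero] at hψ
    linarith
  obtain ⟨g, hg1, hgE, hgz⟩ := E.exists_dual_le_apply_of_le_norm_sub hfar
  have hgz0 : 0 < g z := lt_of_lt_of_le (by norm_num) hgz
  refine ⟨(g z)⁻¹ • z, g, ?_, hg1, ?_, fun i => ?_, fun i => hgE _ (Submodule.subset_span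
    (mem_range_self i))⟩
  · rw [norm_smul, hz1, mul_one, norm_inv, Real.norm_of_nonneg hgz0.le]
    exact inv_le_of_inv_le₀ (by norm_num) (by linarith)
  · rw [map_smul, smul_eq_mul, inv_mul_cancel₀ hgz0.ne']
  · rw [map_smul, show f i z = 0 from hz (Sum.inl i), smul_zero]

theorem exists_biorthogonal_seq (hinf : ¬FiniteDimensional ℝ X) :
    ∃ (x : ℕ → X) (f : ℕ → StrongDual ℝ X), (∀ n, ‖x n‖ ≤ 3) ∧ (∀ n, ‖f n‖ ≤ 1) ∧
      ∀ i j, f i (x j) = if i = j then 1 else 0 := by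
  obtain ⟨s, hs, hrel⟩ := exists_seq_of_forall_finset_exists
    (fun p : X × StrongDual ℝ X => ‖p.1‖ ≤ 3 ∧ ‖p.2‖ ≤ 1 ∧ p.2 p.1 = 1)
    (fun p q => p.2 q.1 = 0 ∧ q.2 p.1 = 0) fun t _ => by
      obtain ⟨y, g, hy, hg, hgy, hfy, hgx⟩ := exists_biorthogonal_extension hinf
        (fun p : t => p.1.1) (fun p : t => p.1.2)
      exact ⟨(y, g), ⟨hy, hg, hgy⟩, fun p hp => ⟨hfy ⟨p, hp⟩, hgx ⟨p, hp⟩⟩⟩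
  refine ⟨fun n => (s n).1, fun n => (s n).2, fun n => (hs n).1, fun n => (hs n).2.1,
    fun i j => ?_⟩
  rcases lt_trichotomy i j with h | rfl | h
  · simpa [h.ne] using (hrel i j h).1
  · simpa using (hs i).2.2
  · simpa [h.ne'] using (hrel j i h).2

end Biorthogonal

section Equilateral

variable {X : Type*} [NormedAddCommGroup X] [NormedSpace ℝ X]

theorem isBSAWith_unitBallHullSeminorm {u : ℕ → X} {F : ℕ → StrongDual ℝ X}
    (hF : ∀ n, ‖F n‖ ≤ 1) (hFu : ∀ i j, F i (u j) = if i = j then 1 else 0) :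
    IsBSAWith (unitBallHullSeminorm (range fun n => (2 : ℝ) • u n))
      (range fun n => (2 : ℝ) • u n) 2 := by
  refine isBSAWith_two (fun x hx => unitBallHullSeminorm_le_one hx) ?_
  rintro _ ⟨i, rfl⟩ _ ⟨j, rfl⟩ hij
  have hval : ∀ k, ((2⁻¹ : ℝ) • (F j - F i)) ((2 : ℝ) • u k) =
      (if j = k then 1 else 0) - (if i = k then 1 else 0) := fun k => by
    simp only [FunLike.coe_smul, FunLike.coe_sub, Pi.smul_apply,
      Pi.sub_apply, map_smul, hFu, smul_eq_mul]
    ring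
  have hne : i ≠ j := fun h => hij (h ▸ rfl)
  refine ⟨((2⁻¹ : ℝ) • (F j - F i) : StrongDual ℝ X), le_unitBallHullSeminorm ?_ ?_, ?_⟩
  · calc ‖(2⁻¹ : ℝ) • (F j - F i)‖ ≤ 2⁻¹ * (‖F j‖ + ‖F i‖) := by
          rw [norm_smul, Real.norm_of_nonneg (by norm_num)]
          gcongr
          exact norm_sub_le _ _
      _ ≤ 2⁻¹ * (1 + 1) := by gcongr <;> exact hF _
      _ = 1 := by norm_num
  · rintro _ ⟨k, rfl⟩
    rw [hval]
    split_ifs <;> simp_all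
  · simp only [ContinuousLinearMap.coe_coe, hval, if_neg hne, if_neg hne.symm]
    norm_num

end Equilateral

theorem stmt17_general {X : Type*} [NormedAddCommGroup X] [NormedSpace ℝ X]
    (hinf : ¬FiniteDimensional ℝ X) :
    ∃ N : X → ℝ,
      (∀ x, N x = 0 ↔ x = 0) ∧
      (∀ x y, N (x + y) ≤ N x + N y) ∧
      (∀ (a : ℝ) (x : X), N (a • x) = |a| * N x) ∧
      (∃ c C : ℝ, 0 < c ∧ ∀ x, c * ‖x‖ ≤ N x ∧ N x ≤ C * ‖x‖) ∧
      (∃ S : Set X, S.Infinite ∧ (∀ x ∈ S, N x = 1) ∧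
        ∀ x ∈ S, ∀ y ∈ S, x ≠ y → N (x - y) = 2) ∧
      KaWith N = 2 := by
  obtain ⟨u, F, hu, hF, hFu⟩ := exists_biorthogonal_seq hinf
  set S := range fun n => (2 : ℝ) • u n
  set N := unitBallHullSeminorm S
  have hS : IsBSAWith N S 2 := isBSAWith_unitBallHullSeminorm hF hFu
  have hSinf : S.Infinite := infinite_range_of_injective fun i j hij => by
    simpa [hFu] using congrArg (F i) hij
  have hS6 : S ⊆ Metric.closedBall 0 6 := by
    rintro _ ⟨n, rfl⟩
    rw [mem_closedBall_zero_iff, norm_smul, Real.norm_two]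
    linarith [hu n]
  have hlower : ∀ x, ‖x‖ / 6 ≤ N x := norm_div_le_unitBallHullSeminorm (by norm_num) hS6
  refine ⟨N, fun x => ⟨fun hx => norm_le_zero_iff.1 (by linarith [hlower x]),
    fun hx => hx ▸ map_zero N⟩, map_add_le_add N,
    fun a x => by rw [map_smul_eq_mul, Real.norm_eq_abs],
    ⟨1 / 6, 1, by norm_num, fun x => ⟨by linarith [hlower x],
      by simpa using unitBallHullSeminorm_le_norm S x⟩⟩,
    ⟨S, hSinf, fun x hx => hS.map_eq_one hSinf.nontrivial hx,
      fun x hx y hy hxy => hS.map_sub_eq_two hx hy hxy⟩, kaWith_eq_two hS hSinf⟩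

/-- Every infinite-dimensional Banach space admits an equivalent norm N with
K_a(X, N) = 2; indeed a norm admitting an infinite normalized 2-equilateral
set. -/
theorem stmt17 {X : Type*} [NormedAddCommGroup X] [NormedSpace ℝ X]
    [CompleteSpace X] (hinf : ¬FiniteDimensional ℝ X) :
    ∃ N : X → ℝ,
      (∀ x, N x = 0 ↔ x = 0) ∧
      (∀ x y, N (x + y) ≤ N x + N y) ∧
      (∀ (a : ℝ) (x : X), N (a • x) = |a| * N x) ∧
      (∃ c C : ℝ, 0 < c ∧ ∀ x, c * ‖x‖ ≤ N x ∧ N x ≤ C * ‖x‖) ∧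
      (∃ S : Set X, S.Infinite ∧ (∀ x ∈ S, N x = 1) ∧
        ∀ x ∈ S, ∀ y ∈ S, x ≠ y → N (x - y) = 2) ∧
      KaWith N = 2 :=
  stmt17_general hinf
end
end
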